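/- arXiv:2502.04829 — 7 statements merged into one kernel-verified Lean document; each statement's English description precedes it below -/
import Mathlib

section
/- Let n ≥ 1 and let f : ℝⁿ → ℝ be twice continuously differentiable. Fix x ∈ ℝⁿ, ε > 0, and suppose there is k > 0 such that the second-order Taylor remainder satisfies |f(x+τ) − f(x) − ∇f(x)·τ − (1/2)τᵀ(∇²f(x))τ| ≤ (1/6)·k·‖τ‖³ for all τ ∈ B_ε(0). For g ∈ ℝⁿ and an n×n real matrix A define L(g, A) = ∫_{B_ε(0)} ( g·τ + (1/2)τᵀAτ − ( f(x+τ) − f(x) ) )² dτ. Then any g ∈ ℝⁿ and n×n matrix A satisfying L(g, A) ≤ L(∇f(x), ∇²f(x)) obey ‖g − ∇f(x)‖ ≤ (1/2)·n·k·ε². -/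
open MeasureTheory Metric
open scoped InnerProductSpace

noncomputable def hessianMatrix {n : ℕ} (f : EuclideanSpace ℝ (Fin n) → ℝ)
    (x : EuclideanSpace ℝ (Fin n)) : Matrix (Fin n) (Fin n) ℝ :=
  fun i j => iteratedFDeriv ℝ 2 f x ![EuclideanSpace.single i 1, EuclideanSpace.single j 1]

lemma setIntegral_comp_isom {n : ℕ} (e : EuclideanSpace ℝ (Fin n) ≃ₗᵢ[ℝ] EuclideanSpace ℝ (Fin n))
    (ε : ℝ) (F : EuclideanSpace ℝ (Fin n) → ℝ) :
    ∫ τ in closedBall (0 : EuclideanSpace ℝ (Fin n)) ε, F (e τ) =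
      ∫ τ in closedBall (0 : EuclideanSpace ℝ (Fin n)) ε, F τ := by
  have hpre : (e : EuclideanSpace ℝ (Fin n) → EuclideanSpace ℝ (Fin n)) ⁻¹' closedBall 0 ε
      = closedBall 0 ε := by
    have h0 : (0 : EuclideanSpace ℝ (Fin n)) = e (e.symm 0) := by simp
    rw [h0, e.isometry.preimage_closedBall]
    simp
  have hemb : MeasurableEmbedding (e : EuclideanSpace ℝ (Fin n) → EuclideanSpace ℝ (Fin n)) :=
    e.toHomeomorph.measurableEmbedding
  have := (e.measurePreserving).setIntegral_preimage_emb hemb F (closedBall 0 ε)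
  rw [hpre] at this
  exact this

lemma odd_setIntegral_zero {n : ℕ} (ε : ℝ) (F : EuclideanSpace ℝ (Fin n) → ℝ)
    (hodd : ∀ τ, F (-τ) = - F τ) :
    ∫ τ in closedBall (0 : EuclideanSpace ℝ (Fin n)) ε, F τ = 0 := by
  have h := setIntegral_comp_isom (LinearIsometryEquiv.neg ℝ) ε F
  simp only [LinearIsometryEquiv.coe_neg] at h
  simp only [hodd, integral_neg] at h
  linarith

lemma coord_flip_int {n : ℕ} (ε : ℝ) (i j : Fin n) (hij : i ≠ j) :
    ∫ τ in closedBall (0 : EuclideanSpace ℝ (Fin n)) ε, τ i * τ j = 0 := by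
  classical
  set e := LinearIsometryEquiv.piLpCongrRight 2
    (fun l : Fin n => if l = i then LinearIsometryEquiv.neg ℝ else
      LinearIsometryEquiv.refl ℝ ℝ) with he
  have happ : ∀ (τ : EuclideanSpace ℝ (Fin n)) (l : Fin n),
      e τ l = if l = i then -(τ l) else τ l := by
    intro τ l
    by_cases h : l = i
    · subst h; simp [he, LinearIsometryEquiv.piLpCongrRight_apply]
    · simp [he, h, LinearIsometryEquiv.piLpCongrRight_apply]
  have h := setIntegral_comp_isom e ε (fun τ => τ i * τ j)
  have h2 : ∀ τ : EuclideanSpace ℝ (Fin n), (e τ) i * (e τ) j = -(τ i * τ j) := by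
    intro τ
    rw [happ, happ]
    rw [if_pos rfl, if_neg (Ne.symm hij)]
    ring
  simp only [h2, integral_neg] at h
  linarith

lemma coord_sq_int {n : ℕ} (ε : ℝ) (i j : Fin n) :
    ∫ τ in closedBall (0 : EuclideanSpace ℝ (Fin n)) ε, (τ i)^2 =
    ∫ τ in closedBall (0 : EuclideanSpace ℝ (Fin n)) ε, (τ j)^2 := by
  classical
  set e := LinearIsometryEquiv.piLpCongrLeft 2 ℝ ℝ (Equiv.swap i j) with he
  have h := setIntegral_comp_isom e ε (fun τ => (τ j)^2)
  have h2 : ∀ τ : EuclideanSpace ℝ (Fin n), (e τ) j = τ i := by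
    intro τ
    simp only [he, LinearIsometryEquiv.piLpCongrLeft_apply, Equiv.piCongrLeft'_apply]
    rw [Equiv.symm_swap, Equiv.swap_apply_right]
  simp only [h2] at h
  exact h

set_option maxHeartbeats 1000000 in
theorem hgrad_gradient_accuracy {n : ℕ} (hn : 1 ≤ n)
    (f : EuclideanSpace ℝ (Fin n) → ℝ) (hf : ContDiff ℝ 2 f)
    (x : EuclideanSpace ℝ (Fin n)) (ε : ℝ) (hε : 0 < ε) (k : ℝ) (hk : 0 < k)
    (hrem : ∀ τ ∈ closedBall (0 : EuclideanSpace ℝ (Fin n)) ε,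
      abs (f (x + τ) - f x - ⟪gradient f x, τ⟫_ℝ -
        (1/2) * ∑ i, ∑ j, τ i * hessianMatrix f x i j * τ j) ≤ (1/6) * k * ‖τ‖ ^ 3)
    (g : EuclideanSpace ℝ (Fin n)) (A : Matrix (Fin n) (Fin n) ℝ)
    (hopt :
      (∫ τ in closedBall (0 : EuclideanSpace ℝ (Fin n)) ε,
        (⟪g, τ⟫_ℝ + (1/2) * ∑ i, ∑ j, τ i * A i j * τ j - (f (x + τ) - f x)) ^ 2) ≤
      ∫ τ in closedBall (0 : EuclideanSpace ℝ (Fin n)) ε,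
        (⟪gradient f x, τ⟫_ℝ + (1/2) * ∑ i, ∑ j, τ i * hessianMatrix f x i j * τ j -
          (f (x + τ) - f x)) ^ 2) :
    ‖g - gradient f x‖ ≤ (1/2) * n * k * ε ^ 2 := by
  classical
  set B := closedBall (0 : EuclideanSpace ℝ (Fin n)) ε with hBdef
  set G := gradient f x with hGdef
  set h := g - G with hhdef
  set Qh : EuclideanSpace ℝ (Fin n) → ℝ :=
    fun τ => ∑ i, ∑ j, τ i * hessianMatrix f x i j * τ j with hQh
  set Qa : EuclideanSpace ℝ (Fin n) → ℝ :=
    fun τ => ∑ i, ∑ j, τ i * A i j * τ j with hQa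
  set r : EuclideanSpace ℝ (Fin n) → ℝ :=
    fun τ => f (x + τ) - f x - ⟪G, τ⟫_ℝ - (1/2) * Qh τ with hrdef
  set q : EuclideanSpace ℝ (Fin n) → ℝ := fun τ => (1/2) * (Qa τ - Qh τ) with hqdef
  set L : EuclideanSpace ℝ (Fin n) → ℝ := fun τ => ⟪h, τ⟫_ℝ with hLdef
  -- continuity
  have hprojc : ∀ i : Fin n, Continuous (fun τ : EuclideanSpace ℝ (Fin n) => τ i) :=
    fun i => (continuous_apply i).comp (PiLp.continuous_ofLp 2 _)
  have hQc : ∀ M : Matrix (Fin n) (Fin n) ℝ,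
      Continuous (fun τ : EuclideanSpace ℝ (Fin n) => ∑ i, ∑ j, τ i * M i j * τ j) := by
    intro M
    refine continuous_finset_sum _ fun i _ => continuous_finset_sum _ fun j _ => ?_
    exact ((hprojc i).mul continuous_const).mul (hprojc j)
  have hinnc : ∀ v : EuclideanSpace ℝ (Fin n),
      Continuous (fun τ : EuclideanSpace ℝ (Fin n) => ⟪v, τ⟫_ℝ) := by
    intro v; exact continuous_const.inner continuous_id
  have hrc : Continuous r := by
    refine (((hf.continuous.comp (continuous_const.add continuous_id)).sub
      continuous_const).sub (hinnc G)).sub (continuous_const.mul (hQc _))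
  have hLc : Continuous L := hinnc h
  have hqc : Continuous q := continuous_const.mul ((hQc A).sub (hQc _))
  have hnormc : Continuous (fun τ : EuclideanSpace ℝ (Fin n) => ‖τ‖^2) :=
    (continuous_norm).pow 2
  have hint : ∀ {F : EuclideanSpace ℝ (Fin n) → ℝ}, Continuous F → IntegrableOn F B := by
    intro F hF
    exact hF.continuousOn.integrableOn_compact (isCompact_closedBall 0 ε)
  -- rewrite hopt
  have hopt' : (∫ τ in B, (L τ + q τ - r τ)^2) ≤ ∫ τ in B, (r τ)^2 := by
    have e1 : ∀ τ : EuclideanSpace ℝ (Fin n),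
        (L τ + q τ - r τ) = ⟪g, τ⟫_ℝ + (1/2) * Qa τ - (f (x + τ) - f x) := by
      intro τ
      simp only [hLdef, hqdef, hrdef, hhdef, inner_sub_left]
      ring
    have e2 : ∀ τ : EuclideanSpace ℝ (Fin n),
        (r τ)^2 = (⟪G, τ⟫_ℝ + (1/2) * Qh τ - (f (x + τ) - f x)) ^ 2 := by
      intro τ; simp only [hrdef]; ring
    calc (∫ τ in B, (L τ + q τ - r τ)^2)
        = ∫ τ in B, (⟪g, τ⟫_ℝ + (1/2) * Qa τ - (f (x + τ) - f x)) ^ 2 := by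
          simp only [e1]
      _ ≤ ∫ τ in B,
          (⟪G, τ⟫_ℝ + (1/2) * Qh τ - (f (x + τ) - f x)) ^ 2 := hopt
      _ = ∫ τ in B, (r τ)^2 := by simp only [e2]
  -- step 1 : pointwise lower bound of square
  have step1 : (∫ τ in B, (L τ^2 + 2*(L τ*q τ) - 2*(L τ*r τ))) ≤ ∫ τ in B, (L τ + q τ - r τ)^2 := by
    refine setIntegral_mono_on ?_ ?_ measurableSet_closedBall ?_
    · exact hint (((hLc.pow 2).add (continuous_const.mul (hLc.mul hqc))).sub
        (continuous_const.mul (hLc.mul hrc)))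
    · exact hint (((hLc.add hqc).sub hrc).pow 2)
    · intro τ _
      nlinarith [sq_nonneg (q τ - r τ)]
  have hintL2 := hint (hLc.pow 2)
  have hintLq := hint (hLc.mul hqc)
  have hintLr := hint (hLc.mul hrc)
  have step2 : (∫ τ in B, (L τ^2 + 2*(L τ*q τ) - 2*(L τ*r τ)))
      = (∫ τ in B, L τ^2) + 2*(∫ τ in B, L τ*q τ) - 2*(∫ τ in B, L τ*r τ) := by
    have h1 : IntegrableOn (fun τ : EuclideanSpace ℝ (Fin n) =>
        L τ^2 + 2*(L τ*q τ)) B := hintL2.add (hintLq.const_mul 2)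
    have h2 : IntegrableOn (fun τ : EuclideanSpace ℝ (Fin n) => 2*(L τ*r τ)) B :=
      hintLr.const_mul 2
    rw [integral_sub h1 h2, integral_add (show Integrable (fun τ => L τ ^ 2) (volume.restrict B) from hintL2)
        (show Integrable (fun τ => 2 * (L τ * q τ)) (volume.restrict B) from hintLq.const_mul 2),
      integral_const_mul, integral_const_mul]
  have step3 : (∫ τ in B, L τ * q τ) = 0 := by
    apply odd_setIntegral_zero
    intro τ
    have hL1 : L (-τ) = - L τ := by simp [hLdef, inner_neg_right]
    have hQ : ∀ M : Matrix (Fin n) (Fin n) ℝ,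
        (∑ i, ∑ j, (-τ) i * M i j * (-τ) j) = ∑ i, ∑ j, τ i * M i j * τ j := by
      intro M
      refine Finset.sum_congr rfl fun i _ => Finset.sum_congr rfl fun j _ => ?_
      show (-(τ i)) * M i j * (-(τ j)) = _
      ring
    have hq1 : q (-τ) = q τ := by simp only [hqdef, hQa, hQh, hQ]
    rw [hL1, hq1]; ring
  -- norms as coordinate sums
  have hnormsq : ∀ v : EuclideanSpace ℝ (Fin n), ‖v‖^2 = ∑ i, (v i)^2 := by
    intro v; rw [EuclideanSpace.norm_eq, Real.sq_sqrt (by positivity)]; simp [sq_abs]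
  set i0 : Fin n := ⟨0, hn⟩ with hi0
  set C : ℝ := ∫ τ in B, (τ i0)^2 with hCdef
  have step4 : (∫ τ in B, L τ^2) = ‖h‖^2 * C := by
    have hexp : ∀ τ : EuclideanSpace ℝ (Fin n),
        L τ^2 = ∑ i, ∑ j, (h i * h j) * (τ i * τ j) := by
      intro τ
      have hL1 : L τ = ∑ i, h i * τ i := by
        simp [hLdef, PiLp.inner_apply, RCLike.inner_apply, conj_trivial]
        exact Finset.sum_congr rfl fun _ _ => mul_comm _ _
      rw [sq, hL1, Finset.sum_mul_sum]
      exact Finset.sum_congr rfl fun i _ => Finset.sum_congr rfl fun j _ => by ring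
    calc (∫ τ in B, L τ^2) = ∫ τ in B, ∑ i, ∑ j, (h i * h j) * (τ i * τ j) := by
          simp only [hexp]
      _ = ∑ i, ∫ τ in B, ∑ j, (h i * h j) * (τ i * τ j) :=
          integral_finset_sum _ (fun i _ => hint (continuous_finset_sum _ fun j _ =>
            continuous_const.mul ((hprojc i).mul (hprojc j))))
      _ = ∑ i, ∑ j, ∫ τ in B, (h i * h j) * (τ i * τ j) :=
          Finset.sum_congr rfl fun i _ => integral_finset_sum _ (fun j _ =>
            hint (continuous_const.mul ((hprojc i).mul (hprojc j))))
      _ = ∑ i, ∑ j, (h i * h j) * ∫ τ in B, τ i * τ j := by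
          simp only [integral_const_mul]
      _ = ∑ i : Fin n, (h i)^2 * C := by
          refine Finset.sum_congr rfl fun i _ => ?_
          rw [Finset.sum_eq_single i]
          · have hsq : (∫ τ in B, τ i * τ i) = C := by
              have h1 : (∫ τ in B, τ i * τ i) = ∫ τ in B, (τ i)^2 := by
                congr 1; funext τ; ring
              rw [h1, hCdef]
              exact coord_sq_int ε i i0
            rw [hsq]; ring
          · intro j _ hji
            rw [coord_flip_int ε i j (Ne.symm hji), mul_zero]
          · intro habs; exact absurd (Finset.mem_univ i) habs
      _ = ‖h‖^2 * C := by rw [hnormsq h, Finset.sum_mul]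
  set I2 : ℝ := ∫ τ in B, ‖τ‖^2 with hI2def
  have hintN : IntegrableOn (fun τ : EuclideanSpace ℝ (Fin n) => ‖τ‖^2) B := hint hnormc
  have step6 : I2 = n * C := by
    calc I2 = ∫ τ in B, ∑ i, (τ i)^2 := by
          rw [hI2def]; congr 1; funext τ; exact hnormsq τ
      _ = ∑ i : Fin n, ∫ τ in B, (τ i)^2 :=
          integral_finset_sum _ (fun i _ => hint ((hprojc i).pow 2))
      _ = ∑ _i : Fin n, C := Finset.sum_congr rfl fun i _ => coord_sq_int ε i i0
      _ = n * C := by rw [Finset.sum_const, Finset.card_univ, Fintype.card_fin, nsmul_eq_mul]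
  -- positivity of C
  have hC0 : 0 < C := by
    rw [hCdef]
    rw [setIntegral_pos_iff_support_of_nonneg_ae (f := fun τ => (τ i0)^2) ?hnn (hint ((hprojc i0).pow 2))]
    case hnn =>
      filter_upwards with τ using sq_nonneg _
    have hker : {τ : EuclideanSpace ℝ (Fin n) | τ i0 = 0} =
        (LinearMap.ker (((innerSL ℝ (EuclideanSpace.single i0 (1:ℝ))) :
          EuclideanSpace ℝ (Fin n) →L[ℝ] ℝ) : EuclideanSpace ℝ (Fin n) →ₗ[ℝ] ℝ) :
            Set (EuclideanSpace ℝ (Fin n))) := by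
      ext τ
      simp [LinearMap.mem_ker, EuclideanSpace.inner_single_left]
    have hnull : volume {τ : EuclideanSpace ℝ (Fin n) | τ i0 = 0} = 0 := by
      rw [hker]
      apply Measure.addHaar_submodule
      intro htop
      have h1 : (EuclideanSpace.single i0 (1:ℝ)) ∈ LinearMap.ker
          (((innerSL ℝ (EuclideanSpace.single i0 (1:ℝ))) :
            EuclideanSpace ℝ (Fin n) →L[ℝ] ℝ) : EuclideanSpace ℝ (Fin n) →ₗ[ℝ] ℝ) := by
        rw [htop]; trivial
      rw [LinearMap.mem_ker] at h1
      simp [EuclideanSpace.inner_single_left, EuclideanSpace.single_apply] at h1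
    have hBsub : B ⊆ (Function.support (fun τ : EuclideanSpace ℝ (Fin n) => (τ i0)^2) ∩ B) ∪
        {τ : EuclideanSpace ℝ (Fin n) | τ i0 = 0} := by
      intro τ hτ
      by_cases hzero : τ i0 = 0
      · exact Or.inr hzero
      · exact Or.inl ⟨by simp [Function.mem_support, pow_eq_zero_iff, hzero], hτ⟩
    have hBpos : 0 < volume B := measure_closedBall_pos volume _ hε
    have hchain : volume B ≤ volume (Function.support
        (fun τ : EuclideanSpace ℝ (Fin n) => (τ i0)^2) ∩ B) +
        volume {τ : EuclideanSpace ℝ (Fin n) | τ i0 = 0} :=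
      le_trans (measure_mono hBsub) (measure_union_le _ _)
    rw [hnull, add_zero] at hchain
    exact lt_of_lt_of_le hBpos hchain
  -- remainder bounds
  have hrbd : ∀ τ ∈ B, |r τ| ≤ (1/6) * k * ‖τ‖^3 := hrem
  have hr2bd : (∫ τ in B, (r τ)^2) ≤ (k^2/36) * ε^4 * I2 := by
    have hmono : (∫ τ in B, (r τ)^2) ≤ ∫ τ in B, (k^2/36) * ε^4 * ‖τ‖^2 := by
      refine setIntegral_mono_on (hint (hrc.pow 2)) (hint (continuous_const.mul hnormc))
        measurableSet_closedBall ?_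
      intro τ hτ
      have h1 := hrbd τ hτ
      have h2 : ‖τ‖ ≤ ε := by
        rw [hBdef, mem_closedBall, dist_zero_right] at hτ; exact hτ
      have h3 : (r τ)^2 ≤ ((1/6) * k * ‖τ‖^3)^2 := by
        rw [← sq_abs (r τ)]
        exact pow_le_pow_left₀ (abs_nonneg _) h1 2
      have ht := norm_nonneg τ
      have h4 : ‖τ‖^4 ≤ ε^4 := pow_le_pow_left₀ ht h2 4
      calc (r τ)^2 ≤ ((1/6) * k * ‖τ‖^3)^2 := h3
        _ = (k^2/36) * (‖τ‖^4 * ‖τ‖^2) := by ring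
        _ ≤ (k^2/36) * (ε^4 * ‖τ‖^2) := by
            refine mul_le_mul_of_nonneg_left ?_ (by positivity)
            exact mul_le_mul_of_nonneg_right h4 (by positivity)
        _ = (k^2/36) * ε^4 * ‖τ‖^2 := by ring
    rw [integral_const_mul] at hmono
    rw [hI2def]
    linarith
  have hlrbd : (∫ τ in B, L τ * r τ) ≤ (k/6) * ε^2 * ‖h‖ * I2 := by
    have hmono : (∫ τ in B, L τ * r τ) ≤ ∫ τ in B, ((k/6) * ε^2 * ‖h‖) * ‖τ‖^2 := by
      refine setIntegral_mono_on (hint (hLc.mul hrc)) (hint (continuous_const.mul hnormc))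
        measurableSet_closedBall ?_
      intro τ hτ
      have h1 := hrbd τ hτ
      have h2 : ‖τ‖ ≤ ε := by
        rw [hBdef, mem_closedBall, dist_zero_right] at hτ; exact hτ
      have h3 : |L τ| ≤ ‖h‖ * ‖τ‖ := by
        rw [hLdef]; exact abs_real_inner_le_norm h τ
      have h4 : L τ * r τ ≤ |L τ| * |r τ| := by
        calc L τ * r τ ≤ |L τ * r τ| := le_abs_self _
          _ = |L τ| * |r τ| := abs_mul _ _
      have h5 : |L τ| * |r τ| ≤ (‖h‖ * ‖τ‖) * ((1/6) * k * ‖τ‖^3) :=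
        mul_le_mul h3 h1 (abs_nonneg _) (by positivity)
      have ht := norm_nonneg τ
      have h7 : ‖τ‖^2 ≤ ε^2 := pow_le_pow_left₀ ht h2 2
      have h6 : (‖h‖ * ‖τ‖) * ((1/6) * k * ‖τ‖^3) ≤ ((k/6) * ε^2 * ‖h‖) * ‖τ‖^2 := by
        calc (‖h‖ * ‖τ‖) * ((1/6) * k * ‖τ‖^3) = (k/6) * ‖h‖ * (‖τ‖^2 * ‖τ‖^2) := by ring
          _ ≤ (k/6) * ‖h‖ * (ε^2 * ‖τ‖^2) := by
              refine mul_le_mul_of_nonneg_left ?_ (by positivity)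
              exact mul_le_mul_of_nonneg_right h7 (by positivity)
          _ = ((k/6) * ε^2 * ‖h‖) * ‖τ‖^2 := by ring
      exact le_trans h4 (le_trans h5 h6)
    rw [integral_const_mul] at hmono
    rw [hI2def]
    linarith
  -- combine
  have hmain : ‖h‖^2 * C ≤ (k^2/36) * ε^4 * (n*C) + 2 * ((k/6) * ε^2 * ‖h‖ * (n*C)) := by
    have := le_trans step1 hopt'
    rw [step2, step3] at this
    rw [step6] at hr2bd hlrbd
    linarith [step4]
  have hfinal : ‖h‖^2 ≤ (k^2/36) * ε^4 * n + (k/3) * ε^2 * ‖h‖ * n := by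
    nlinarith [hC0]
  have hn1 : (1:ℝ) ≤ (n:ℝ) := by exact_mod_cast hn
  have hgoal : ‖h‖ ≤ (1/2) * n * k * ε^2 := by
    nlinarith [norm_nonneg h, sq_nonneg (‖h‖ - (1/2)*(n:ℝ)*k*ε^2),
      mul_pos hk (mul_pos hε hε), sq_nonneg ε, hε.le, hk.le,
      mul_nonneg (mul_nonneg hk.le (sq_nonneg ε)) (norm_nonneg h),
      mul_pos (mul_pos hk hk) (mul_pos (mul_pos hε hε) (mul_pos hε hε))]
  rw [hhdef, hGdef] at hgoal
  exact hgoal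
end

section
/- Let n ≥ 1 and let f : ℝⁿ → ℝ be differentiable with |f(x+τ) − f(x) − ∇f(x)·τ| ≤ (1/2)·k·‖τ‖² for all τ ∈ B_ε(0), for some k > 0, x ∈ ℝⁿ, ε > 0. Let w : B_ε(0) → ℝ be measurable with 0 < W_min ≤ w(τ) ≤ W_u ≤ 1 for all τ ∈ B_ε(0). For g ∈ ℝⁿ define L_w(g) = ∫_{B_ε(0)} w(τ)·( g·τ − ( f(x+τ) − f(x) ) )² dτ. Then any g ∈ ℝⁿ with L_w(g) ≤ L_w(∇f(x)) satisfies ‖g − ∇f(x)‖ ≤ ε·k·(n+2)·( W_u + sqrt( W_u² + W_min/(n+2) ) ) / (2·W_min). -/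
open MeasureTheory Metric
open scoped InnerProductSpace

variable {n : ℕ}
lemma normsq_ball_integral (hn : 1 ≤ n) {ε : ℝ} (hε : 0 < ε) :
    ∫ τ in closedBall (0 : EuclideanSpace ℝ (Fin n)) ε, ‖τ‖ ^ 2 =
      n * (volume (ball (0 : EuclideanSpace ℝ (Fin n)) 1)).toReal * (ε ^ (n + 2) / (n + 2)) := by
  haveI : Nontrivial (EuclideanSpace ℝ (Fin n)) := by
    have : 0 < Module.finrank ℝ (EuclideanSpace ℝ (Fin n)) := by
      rw [finrank_euclideanSpace_fin]; omega
    exact Module.nontrivial_of_finrank_pos this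
  have key := integral_fun_norm_addHaar (volume : Measure (EuclideanSpace ℝ (Fin n)))
    (Set.indicator (Set.Icc 0 ε) (· ^ 2))
  have hdim : Module.finrank ℝ (EuclideanSpace ℝ (Fin n)) = n := finrank_euclideanSpace_fin
  rw [hdim] at key
  have hL : (∫ x : EuclideanSpace ℝ (Fin n),
      Set.indicator (Set.Icc 0 ε) (· ^ 2) ‖x‖) =
      ∫ τ in closedBall (0 : EuclideanSpace ℝ (Fin n)) ε, ‖τ‖ ^ 2 := by
    rw [← integral_indicator (measurableSet_closedBall)]
    congr 1
    ext x
    by_cases hx : x ∈ closedBall (0 : EuclideanSpace ℝ (Fin n)) ε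
    · rw [Set.indicator_of_mem hx, Set.indicator_of_mem]
      exact ⟨norm_nonneg x, mem_closedBall_zero_iff.1 hx⟩
    · rw [Set.indicator_of_notMem hx, Set.indicator_of_notMem]
      intro hmem
      exact hx (mem_closedBall_zero_iff.2 hmem.2)
  have hR : (∫ y in Set.Ioi (0:ℝ), y ^ (n - 1) • Set.indicator (Set.Icc 0 ε) (· ^ 2) y) =
      ε ^ (n + 2) / (n + 2) := by
    have h1 : ∀ y : ℝ, y ^ (n - 1) • Set.indicator (Set.Icc 0 ε) (· ^ 2) y =
        Set.indicator (Set.Icc 0 ε) (fun y => y ^ (n - 1) * y ^ 2) y := by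
      intro y
      by_cases h : y ∈ Set.Icc (0:ℝ) ε <;> simp [h, smul_eq_mul]
    simp_rw [h1]
    rw [setIntegral_indicator measurableSet_Icc]
    have h2 : Set.Ioi (0:ℝ) ∩ Set.Icc 0 ε = Set.Ioc 0 ε := by
      ext y
      simp only [Set.mem_inter_iff, Set.mem_Ioi, Set.mem_Icc, Set.mem_Ioc]
      constructor
      · rintro ⟨h, _, h2⟩; exact ⟨h, h2⟩
      · rintro ⟨h1, h2⟩; exact ⟨h1, h1.le, h2⟩
    rw [h2]
    have h3 : ∀ y ∈ Set.Ioc (0:ℝ) ε, y ^ (n - 1) * y ^ 2 = y ^ (n + 1) := by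
      intro y _
      rw [← pow_add]
      congr 1
      omega
    rw [setIntegral_congr_fun measurableSet_Ioc h3]
    rw [← intervalIntegral.integral_of_le hε.le, integral_pow]
    push_cast
    ring_nf
  rw [hL, hR] at key
  rw [key]
  simp only [nsmul_eq_mul, smul_eq_mul, measureReal_def]
  ring

lemma coord_swap_integral {ε : ℝ} (i j : Fin n) :
    ∫ τ in closedBall (0 : EuclideanSpace ℝ (Fin n)) ε, (τ i) ^ 2 =
      ∫ τ in closedBall (0 : EuclideanSpace ℝ (Fin n)) ε, (τ j) ^ 2 := by
  set e := LinearIsometryEquiv.piLpCongrLeft 2 ℝ ℝ (Equiv.swap i j) with he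
  have hpre : e ⁻¹' closedBall (0 : EuclideanSpace ℝ (Fin n)) ε =
      closedBall (0 : EuclideanSpace ℝ (Fin n)) ε := by
    ext τ
    simp [mem_closedBall_zero_iff, e.norm_map]
  have hcomp : ∀ τ : EuclideanSpace ℝ (Fin n), (e τ) j = τ i := by
    intro τ
    rw [LinearIsometryEquiv.piLpCongrLeft_apply]
    simp [Equiv.piCongrLeft'_apply, Equiv.swap_apply_right]
  calc ∫ τ in closedBall (0 : EuclideanSpace ℝ (Fin n)) ε, (τ i) ^ 2
      = ∫ τ in e ⁻¹' closedBall (0 : EuclideanSpace ℝ (Fin n)) ε, ((e τ) j) ^ 2 := by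
        rw [hpre]; exact setIntegral_congr_fun measurableSet_closedBall
          (fun τ _ => by rw [hcomp])
    _ = ∫ τ in closedBall (0 : EuclideanSpace ℝ (Fin n)) ε, (τ j) ^ 2 :=
        e.measurePreserving.setIntegral_preimage_emb
          e.toHomeomorph.measurableEmbedding (fun y => (y j) ^ 2) _

lemma normsq_eq_sum_coord (τ : EuclideanSpace ℝ (Fin n)) :
    ‖τ‖ ^ 2 = ∑ i, (τ i) ^ 2 := by
  rw [← real_inner_self_eq_norm_sq]
  simp only [PiLp.inner_apply, RCLike.inner_apply, conj_trivial, sq]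

lemma coord_ball_integral (hn : 1 ≤ n) {ε : ℝ} (hε : 0 < ε) (i : Fin n) :
    ∫ τ in closedBall (0 : EuclideanSpace ℝ (Fin n)) ε, (τ i) ^ 2 =
      (volume (ball (0 : EuclideanSpace ℝ (Fin n)) 1)).toReal * (ε ^ (n + 2) / (n + 2)) := by
  have hcont : ∀ j : Fin n, Continuous (fun τ : EuclideanSpace ℝ (Fin n) => (τ j) ^ 2) := by
    intro j; fun_prop
  have hint : ∀ j : Fin n,
      IntegrableOn (fun τ : EuclideanSpace ℝ (Fin n) => (τ j) ^ 2)
        (closedBall 0 ε) volume :=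
    fun j => ((hcont j).continuousOn).integrableOn_compact (isCompact_closedBall _ _)
  have hsum : ∑ j : Fin n, ∫ τ in closedBall (0 : EuclideanSpace ℝ (Fin n)) ε, (τ j) ^ 2 =
      ∫ τ in closedBall (0 : EuclideanSpace ℝ (Fin n)) ε, ‖τ‖ ^ 2 := by
    rw [← integral_finset_sum _ (fun j _ => hint j)]
    exact setIntegral_congr_fun measurableSet_closedBall
      (fun τ _ => (normsq_eq_sum_coord τ).symm)
  have hall : ∀ j : Fin n,
      (∫ τ in closedBall (0 : EuclideanSpace ℝ (Fin n)) ε, (τ j) ^ 2) =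
      ∫ τ in closedBall (0 : EuclideanSpace ℝ (Fin n)) ε, (τ i) ^ 2 :=
    fun j => coord_swap_integral j i
  rw [Finset.sum_congr rfl (fun j _ => hall j), Finset.sum_const, Finset.card_univ,
    Fintype.card_fin, nsmul_eq_mul] at hsum
  rw [normsq_ball_integral hn hε] at hsum
  have hn' : (n : ℝ) ≠ 0 := by positivity
  apply mul_left_cancel₀ hn'
  rw [hsum]; ring

lemma inner_ball_integral (hn : 1 ≤ n) {ε : ℝ} (hε : 0 < ε) (u : EuclideanSpace ℝ (Fin n)) :
    ∫ τ in closedBall (0 : EuclideanSpace ℝ (Fin n)) ε, ⟪u, τ⟫_ℝ ^ 2 =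
      ‖u‖ ^ 2 * ((volume (ball (0 : EuclideanSpace ℝ (Fin n)) 1)).toReal *
        (ε ^ (n + 2) / (n + 2))) := by
  rcases eq_or_ne u 0 with rfl | hu
  · simp
  · have hnorm : (0:ℝ) < ‖u‖ := norm_pos_iff.2 hu
    set i0 : Fin n := ⟨0, hn⟩
    have hcard : Module.finrank ℝ (EuclideanSpace ℝ (Fin n)) = Fintype.card (Fin n) := by
      rw [finrank_euclideanSpace_fin, Fintype.card_fin]
    have horth : Orthonormal ℝ (Set.restrict ({i0} : Set (Fin n))
        (fun _ : Fin n => ‖u‖⁻¹ • u)) := by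
      rw [orthonormal_iff_ite]
      intro i j
      have : i = j := Subtype.ext (by
        have hi := i.2; have hj := j.2
        simp only [Set.mem_singleton_iff] at hi hj
        rw [hi, hj])
      subst this
      simp only [if_pos rfl, Set.restrict_apply, Set.restrict, ↓reduceIte]
      rw [real_inner_smul_left, real_inner_smul_right, real_inner_self_eq_norm_sq]
      field_simp
    obtain ⟨b, hb⟩ := horth.exists_orthonormalBasis_extension_of_card_eq hcard
    have hb0 : b i0 = ‖u‖⁻¹ • u := hb i0 rfl
    have hinner : ∀ τ : EuclideanSpace ℝ (Fin n), ⟪u, τ⟫_ℝ = ‖u‖ * (b.repr τ i0) := by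
      intro τ
      rw [b.repr_apply_apply, hb0, real_inner_smul_left]
      field_simp
    have hrepr : ∫ τ in closedBall (0 : EuclideanSpace ℝ (Fin n)) ε, (b.repr τ i0) ^ 2 =
        ∫ y in closedBall (0 : EuclideanSpace ℝ (Fin n)) ε, (y i0) ^ 2 := by
      have hpre : (b.repr : EuclideanSpace ℝ (Fin n) → EuclideanSpace ℝ (Fin n)) ⁻¹'
          closedBall 0 ε = closedBall 0 ε := by
        ext τ
        simp [mem_closedBall_zero_iff, b.repr.norm_map]
      calc ∫ τ in closedBall (0 : EuclideanSpace ℝ (Fin n)) ε, (b.repr τ i0) ^ 2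
          = ∫ τ in (b.repr : EuclideanSpace ℝ (Fin n) → EuclideanSpace ℝ (Fin n)) ⁻¹'
              closedBall 0 ε, ((b.repr τ) i0) ^ 2 := by rw [hpre]
        _ = ∫ y in closedBall (0 : EuclideanSpace ℝ (Fin n)) ε, (y i0) ^ 2 :=
            b.measurePreserving_repr.setIntegral_preimage_emb
              b.repr.toHomeomorph.measurableEmbedding (fun y => (y i0) ^ 2) _
    calc ∫ τ in closedBall (0 : EuclideanSpace ℝ (Fin n)) ε, ⟪u, τ⟫_ℝ ^ 2
        = ∫ τ in closedBall (0 : EuclideanSpace ℝ (Fin n)) ε, ‖u‖ ^ 2 * (b.repr τ i0) ^ 2 := by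
          exact setIntegral_congr_fun measurableSet_closedBall
            (fun τ _ => by rw [hinner τ]; ring)
      _ = ‖u‖ ^ 2 * ∫ τ in closedBall (0 : EuclideanSpace ℝ (Fin n)) ε, (b.repr τ i0) ^ 2 :=
          integral_const_mul _ _
      _ = _ := by rw [hrepr, coord_ball_integral hn hε i0]

set_option maxHeartbeats 2000000

theorem evograd_controllable_accuracy {n : ℕ} (hn : 1 ≤ n)
    (f : EuclideanSpace ℝ (Fin n) → ℝ) (hf : Differentiable ℝ f)
    (x : EuclideanSpace ℝ (Fin n)) (ε : ℝ) (hε : 0 < ε) (k : ℝ) (hk : 0 < k)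
    (hrem : ∀ τ ∈ closedBall (0 : EuclideanSpace ℝ (Fin n)) ε,
      abs (f (x + τ) - f x - ⟪gradient f x, τ⟫_ℝ) ≤ (1/2) * k * ‖τ‖ ^ 2)
    (w : EuclideanSpace ℝ (Fin n) → ℝ) (hw : Measurable w)
    (Wmin Wu : ℝ) (hWmin : 0 < Wmin) (hWu : Wu ≤ 1)
    (hwbound : ∀ τ ∈ closedBall (0 : EuclideanSpace ℝ (Fin n)) ε,
      Wmin ≤ w τ ∧ w τ ≤ Wu)
    (g : EuclideanSpace ℝ (Fin n))
    (hopt :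
      (∫ τ in closedBall (0 : EuclideanSpace ℝ (Fin n)) ε,
        w τ * (⟪g, τ⟫_ℝ - (f (x + τ) - f x)) ^ 2) ≤
      ∫ τ in closedBall (0 : EuclideanSpace ℝ (Fin n)) ε,
        w τ * (⟪gradient f x, τ⟫_ℝ - (f (x + τ) - f x)) ^ 2) :
    ‖g - gradient f x‖ ≤
      ε * k * (n + 2) * (Wu + Real.sqrt (Wu ^ 2 + Wmin / (n + 2))) / (2 * Wmin) := by
  classical
  set u := gradient f x with hu
  set d := g - u with hd
  set B := closedBall (0 : EuclideanSpace ℝ (Fin n)) ε with hBdef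
  set r : EuclideanSpace ℝ (Fin n) → ℝ := fun τ => f (x + τ) - f x - ⟪u, τ⟫_ℝ with hr
  have h0B : (0 : EuclideanSpace ℝ (Fin n)) ∈ B := mem_closedBall_self hε.le
  have hWu0 : 0 < Wu := lt_of_lt_of_le hWmin ((hwbound 0 h0B).1.trans (hwbound 0 h0B).2)
  have hBfin : volume B ≠ ⊤ := measure_closedBall_lt_top.ne
  have hBlt : volume B < ⊤ := measure_closedBall_lt_top
  have hBmeas : MeasurableSet B := measurableSet_closedBall
  -- continuity / measurability
  have hcont_inner : Continuous fun τ : EuclideanSpace ℝ (Fin n) => ⟪d, τ⟫_ℝ :=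
    continuous_const.inner continuous_id
  have hcont_inner_u : Continuous fun τ : EuclideanSpace ℝ (Fin n) => ⟪u, τ⟫_ℝ :=
    continuous_const.inner continuous_id
  have hc1 : Continuous fun τ : EuclideanSpace ℝ (Fin n) => f (x + τ) :=
    hf.continuous.comp (continuous_const.add continuous_id)
  have hcont_r : Continuous r := (hc1.sub continuous_const).sub hcont_inner_u
  -- bounds on B
  have hinner_bd : ∀ τ ∈ B, |⟪d, τ⟫_ℝ| ≤ ‖d‖ * ε := by
    intro τ hτ
    refine (abs_real_inner_le_norm d τ).trans ?_
    exact mul_le_mul_of_nonneg_left (mem_closedBall_zero_iff.1 hτ) (norm_nonneg d)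
  have hr_bd : ∀ τ ∈ B, |r τ| ≤ (1/2) * k * ε ^ 2 := by
    intro τ hτ
    refine (hrem τ hτ).trans ?_
    have hτε : ‖τ‖ ≤ ε := mem_closedBall_zero_iff.1 hτ
    have h2 : ‖τ‖ ^ 2 ≤ ε ^ 2 := pow_le_pow_left₀ (norm_nonneg τ) hτε 2
    nlinarith [mul_nonneg hk.le (sub_nonneg.2 h2)]
  have hw_bd : ∀ τ ∈ B, |w τ| ≤ Wu := by
    intro τ hτ
    rw [abs_of_nonneg (hWmin.le.trans (hwbound τ hτ).1)]
    exact (hwbound τ hτ).2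
  -- integrability helper
  have hIntOf : ∀ (h : EuclideanSpace ℝ (Fin n) → ℝ), AEStronglyMeasurable h volume →
      ∀ Cb : ℝ, (∀ τ ∈ B, |h τ| ≤ Cb) → IntegrableOn h B volume := by
    intro h hm Cb hb
    refine Measure.integrableOn_of_bounded (M := Cb) hBfin hm ?_
    filter_upwards [ae_restrict_mem hBmeas] with τ hτ
    simpa using hb τ hτ
  set A : EuclideanSpace ℝ (Fin n) → ℝ := fun τ => w τ * ⟪d, τ⟫_ℝ ^ 2 with hA_def
  set Bt : EuclideanSpace ℝ (Fin n) → ℝ := fun τ => w τ * ⟪d, τ⟫_ℝ * r τ with hBt_def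
  set C : EuclideanSpace ℝ (Fin n) → ℝ := fun τ => w τ * r τ ^ 2 with hC_def
  have hmA : AEStronglyMeasurable A volume :=
    (hw.mul ((hcont_inner.pow 2).measurable)).aestronglyMeasurable
  have hmBt : AEStronglyMeasurable Bt volume :=
    ((hw.mul hcont_inner.measurable).mul hcont_r.measurable).aestronglyMeasurable
  have hmC : AEStronglyMeasurable C volume :=
    (hw.mul ((hcont_r.pow 2).measurable)).aestronglyMeasurable
  have hIA : IntegrableOn A B volume := by
    refine hIntOf A hmA (Wu * (‖d‖ * ε) ^ 2) ?_
    intro τ hτ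
    have h2 : |⟪d, τ⟫_ℝ ^ 2| ≤ (‖d‖ * ε) ^ 2 := by
      rw [abs_pow]
      exact pow_le_pow_left₀ (abs_nonneg _) (hinner_bd τ hτ) 2
    calc |A τ| = |w τ| * |⟪d, τ⟫_ℝ ^ 2| := by rw [hA_def]; exact abs_mul _ _
      _ ≤ Wu * (‖d‖ * ε) ^ 2 := mul_le_mul (hw_bd τ hτ) h2 (abs_nonneg _) hWu0.le
  have hIBt : IntegrableOn Bt B volume := by
    refine hIntOf Bt hmBt (Wu * (‖d‖ * ε) * ((1/2) * k * ε ^ 2)) ?_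
    intro τ hτ
    have h1 : |w τ| * |⟪d, τ⟫_ℝ| ≤ Wu * (‖d‖ * ε) :=
      mul_le_mul (hw_bd τ hτ) (hinner_bd τ hτ) (abs_nonneg _) hWu0.le
    calc |Bt τ| = |w τ| * |⟪d, τ⟫_ℝ| * |r τ| := by rw [hBt_def]; simp [abs_mul]
      _ ≤ _ := mul_le_mul h1 (hr_bd τ hτ) (abs_nonneg _) (by positivity)
  have hIC : IntegrableOn C B volume := by
    refine hIntOf C hmC (Wu * ((1/2) * k * ε ^ 2) ^ 2) ?_
    intro τ hτ
    have h2 : |r τ ^ 2| ≤ ((1/2) * k * ε ^ 2) ^ 2 := by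
      rw [abs_pow]
      exact pow_le_pow_left₀ (abs_nonneg _) (hr_bd τ hτ) 2
    calc |C τ| = |w τ| * |r τ ^ 2| := by rw [hC_def]; exact abs_mul _ _
      _ ≤ _ := mul_le_mul (hw_bd τ hτ) h2 (abs_nonneg _) hWu0.le
  have hIQ : IntegrableOn (fun τ : EuclideanSpace ℝ (Fin n) => ⟪d, τ⟫_ℝ ^ 2) B volume :=
    ((hcont_inner.pow 2).continuousOn).integrableOn_compact (isCompact_closedBall _ _)
  -- rewrite hopt
  have hid1 : ∀ τ : EuclideanSpace ℝ (Fin n),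
      w τ * (⟪g, τ⟫_ℝ - (f (x + τ) - f x)) ^ 2 = A τ - 2 * Bt τ + C τ := by
    intro τ
    have hdg : ⟪d, τ⟫_ℝ = ⟪g, τ⟫_ℝ - ⟪u, τ⟫_ℝ := inner_sub_left _ _ _
    rw [hA_def, hBt_def, hC_def, hr]
    simp only [hdg]
    ring
  have hid2 : ∀ τ : EuclideanSpace ℝ (Fin n),
      w τ * (⟪u, τ⟫_ℝ - (f (x + τ) - f x)) ^ 2 = C τ := by
    intro τ
    rw [hC_def, hr]
    ring
  have hopt' : (∫ τ in B, A τ) - 2 * ∫ τ in B, Bt τ ≤ 0 := by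
    have hI2Bt : IntegrableOn (fun τ => 2 * Bt τ) B volume := hIBt.const_mul 2
    have hIsub : IntegrableOn (fun τ => A τ - 2 * Bt τ) B volume := hIA.sub hI2Bt
    have e1 : (∫ τ in B, w τ * (⟪g, τ⟫_ℝ - (f (x + τ) - f x)) ^ 2) =
        (∫ τ in B, A τ) - 2 * (∫ τ in B, Bt τ) + ∫ τ in B, C τ := by
      rw [setIntegral_congr_fun hBmeas (fun τ _ => hid1 τ),
        integral_add hIsub hIC, integral_sub hIA hI2Bt, integral_const_mul]
    have e2 : (∫ τ in B, w τ * (⟪u, τ⟫_ℝ - (f (x + τ) - f x)) ^ 2) = ∫ τ in B, C τ :=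
      setIntegral_congr_fun hBmeas (fun τ _ => hid2 τ)
    rw [e1, e2] at hopt
    linarith
  -- lower bound
  set V₁ := (volume (ball (0 : EuclideanSpace ℝ (Fin n)) 1)).toReal with hV₁
  have hlow : Wmin * (‖d‖ ^ 2 * (V₁ * (ε ^ (n + 2) / (n + 2)))) ≤ ∫ τ in B, A τ := by
    have hmono : (∫ τ in B, Wmin * ⟪d, τ⟫_ℝ ^ 2) ≤ ∫ τ in B, A τ := by
      refine setIntegral_mono_on (hIQ.const_mul Wmin) hIA hBmeas ?_
      intro τ hτ
      exact mul_le_mul_of_nonneg_right (hwbound τ hτ).1 (sq_nonneg _)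
    rw [integral_const_mul, inner_ball_integral hn hε d] at hmono
    linarith
  -- upper bound
  have hVtop : volume B = ENNReal.ofReal (ε ^ n) *
      volume (ball (0 : EuclideanSpace ℝ (Fin n)) 1) := by
    have h := Measure.addHaar_closedBall
      (volume : Measure (EuclideanSpace ℝ (Fin n))) (0 : EuclideanSpace ℝ (Fin n)) hε.le
    rwa [finrank_euclideanSpace_fin] at h
  have hV : (volume B).toReal = ε ^ n * V₁ := by
    rw [hVtop, ENNReal.toReal_mul, ENNReal.toReal_ofReal (by positivity)]
  have hup : (∫ τ in B, Bt τ) ≤ Wu * (‖d‖ * ε) * ((1/2) * k * ε ^ 2) * (ε ^ n * V₁) := by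
    have hbd : ∀ τ ∈ B, ‖Bt τ‖ ≤ Wu * (‖d‖ * ε) * ((1/2) * k * ε ^ 2) := by
      intro τ hτ
      have h1 : |w τ| * |⟪d, τ⟫_ℝ| ≤ Wu * (‖d‖ * ε) :=
        mul_le_mul (hw_bd τ hτ) (hinner_bd τ hτ) (abs_nonneg _) hWu0.le
      calc ‖Bt τ‖ = |w τ| * |⟪d, τ⟫_ℝ| * |r τ| := by rw [hBt_def]; simp [abs_mul]
        _ ≤ _ := mul_le_mul h1 (hr_bd τ hτ) (abs_nonneg _) (by positivity)
    have h := norm_setIntegral_le_of_norm_le_const (μ := volume) (s := B)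
      (f := Bt) hBlt hbd
    rw [measureReal_def, hV] at h
    calc (∫ τ in B, Bt τ) ≤ ‖∫ τ in B, Bt τ‖ := le_abs_self _
      _ ≤ _ := h
  have hV₁pos : 0 < V₁ := by
    rw [hV₁]
    exact ENNReal.toReal_pos (measure_ball_pos volume 0 one_pos).ne' measure_ball_lt_top.ne
  -- combine
  have hkey : Wmin * ‖d‖ ^ 2 * (ε ^ (n + 2) / (n + 2)) ≤ Wu * k * (ε ^ (n + 2) * ε) * ‖d‖ := by
    have hcomb : Wmin * (‖d‖ ^ 2 * (V₁ * (ε ^ (n + 2) / (n + 2)))) ≤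
        Wu * (‖d‖ * ε) * ((1/2) * k * ε ^ 2) * (ε ^ n * V₁) * 2 := by
      nlinarith [hlow, hup, hopt']
    have h2 : Wu * (‖d‖ * ε) * ((1/2) * k * ε ^ 2) * (ε ^ n * V₁) * 2 =
        Wu * k * (ε ^ (n + 2) * ε) * ‖d‖ * V₁ := by
      rw [pow_add]; ring
    have h3 : Wmin * (‖d‖ ^ 2 * (V₁ * (ε ^ (n + 2) / (n + 2)))) =
        Wmin * ‖d‖ ^ 2 * (ε ^ (n + 2) / (n + 2)) * V₁ := by ring
    rw [h2, h3] at hcomb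
    exact le_of_mul_le_mul_right hcomb hV₁pos
  have hn2 : (0:ℝ) < (n : ℝ) + 2 := by positivity
  have hnd : ‖d‖ ≤ ε * k * (n + 2) * Wu / Wmin := by
    rcases eq_or_lt_of_le (norm_nonneg d) with h0 | h0
    · rw [← h0]; positivity
    · have hεpow : (0:ℝ) < ε ^ (n + 2) := by positivity
      rw [le_div_iff₀ hWmin]
      have hkeyN : Wmin * ‖d‖ ^ 2 * ε ^ (n + 2) ≤
          Wu * k * (ε ^ (n + 2) * ε) * ‖d‖ * ((n:ℝ) + 2) := by
        rw [← div_le_iff₀ hn2]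
        calc Wmin * ‖d‖ ^ 2 * ε ^ (n + 2) / ((n:ℝ) + 2) =
            Wmin * ‖d‖ ^ 2 * (ε ^ (n + 2) / ((n:ℝ) + 2)) := by ring
          _ ≤ _ := hkey
      have hDP : (0:ℝ) < ‖d‖ * ε ^ (n + 2) := by positivity
      refine le_of_mul_le_mul_right ?_ hDP
      calc ‖d‖ * Wmin * (‖d‖ * ε ^ (n + 2)) = Wmin * ‖d‖ ^ 2 * ε ^ (n + 2) := by ring
        _ ≤ Wu * k * (ε ^ (n + 2) * ε) * ‖d‖ * ((n:ℝ) + 2) := hkeyN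
        _ = ε * k * ((n:ℝ) + 2) * Wu * (‖d‖ * ε ^ (n + 2)) := by ring
  refine hnd.trans ?_
  have hsqrt : Wu ≤ Real.sqrt (Wu ^ 2 + Wmin / (n + 2)) := by
    have h1 : Wu = Real.sqrt (Wu ^ 2) := (Real.sqrt_sq hWu0.le).symm
    refine le_trans (le_of_eq h1) (Real.sqrt_le_sqrt ?_)
    have h2 : 0 < Wmin / ((n:ℝ) + 2) := by positivity
    linarith
  rw [div_le_div_iff₀ hWmin (by positivity : (0:ℝ) < 2 * Wmin)]
  have hεk : 0 < ε * k * ((n:ℝ) + 2) := by positivity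
  have hfin : 0 ≤ ε * k * ((n:ℝ) + 2) * Wmin *
      (Real.sqrt (Wu ^ 2 + Wmin / ((n:ℝ) + 2)) - Wu) :=
    mul_nonneg (mul_nonneg hεk.le hWmin.le) (sub_nonneg.2 hsqrt)
  nlinarith [hfin]
end

section
/- Let f : ℝⁿ → ℝ be convex and differentiable with ∇f Lipschitz continuous with constant κ_f > 0. Let κ_g > 0, t ≥ 0, let 0 < α ≤ min(1/κ_g, 1/κ_f), and let x_k ∈ ℝⁿ. Suppose g ∈ ℝⁿ satisfies ‖g − ∇f(x_k)‖ ≤ t·κ_g, and set x_{k+1} = x_k − α·g. Then f(x_{k+1}) ≤ f(x_k) − (α/2)·‖∇f(x_k)‖² + (κ_g/2)·t². -/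
open scoped InnerProductSpace

lemma descent_aux {n : ℕ}
    (f : EuclideanSpace ℝ (Fin n) → ℝ) (hdiff : Differentiable ℝ f)
    (κf : ℝ) (hκf : 0 ≤ κf)
    (hlip : ∀ x y, ‖gradient f x - gradient f y‖ ≤ κf * ‖x - y‖)
    (x v : EuclideanSpace ℝ (Fin n)) :
    f (x + v) ≤ f x + ⟪gradient f x, v⟫_ℝ + κf / 2 * ‖v‖ ^ 2 := by
  set h : ℝ → ℝ := fun s =>
    f (x + s • v) - s * ⟪gradient f x, v⟫_ℝ - s ^ 2 * (κf / 2) * ‖v‖ ^ 2 with hh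
  have hline : ∀ s : ℝ, HasDerivAt (fun s : ℝ => x + s • v) v s := by
    intro s
    simpa using ((hasDerivAt_id s).smul_const v).const_add x
  have hcomp : ∀ s : ℝ, HasDerivAt (fun s : ℝ => f (x + s • v))
      ⟪gradient f (x + s • v), v⟫_ℝ s := by
    intro s
    have h1 := (hdiff (x + s • v)).hasGradientAt.hasFDerivAt.comp_hasDerivAt s (hline s)
    simpa [InnerProductSpace.toDual_apply_apply, Function.comp_def] using h1
  have hd : ∀ s : ℝ, HasDerivAt h
      (⟪gradient f (x + s • v), v⟫_ℝ - ⟪gradient f x, v⟫_ℝ - 2 * s * (κf / 2) * ‖v‖ ^ 2) s := by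
    intro s
    have h2 : HasDerivAt (fun s : ℝ => s * ⟪gradient f x, v⟫_ℝ) ⟪gradient f x, v⟫_ℝ s := by
      simpa using (hasDerivAt_id s).mul_const ⟪gradient f x, v⟫_ℝ
    have h3 : HasDerivAt (fun s : ℝ => s ^ 2 * (κf / 2) * ‖v‖ ^ 2)
        (2 * s * (κf / 2) * ‖v‖ ^ 2) s := by
      have := ((hasDerivAt_pow 2 s).mul_const (κf / 2)).mul_const (‖v‖ ^ 2)
      simpa [mul_comm, mul_assoc, mul_left_comm] using this
    exact ((hcomp s).sub h2).sub h3
  have hanti : AntitoneOn h (Set.Icc 0 1) := by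
    apply antitoneOn_of_deriv_nonpos (convex_Icc 0 1)
    · exact fun s _ => (hd s).continuousAt.continuousWithinAt
    · intro s _
      exact (hd s).differentiableAt.differentiableWithinAt
    · intro s hs
      rw [interior_Icc] at hs
      rw [(hd s).deriv]
      have hip : ⟪gradient f (x + s • v) - gradient f x, v⟫_ℝ ≤ κf * s * ‖v‖ ^ 2 := by
        calc ⟪gradient f (x + s • v) - gradient f x, v⟫_ℝ
            ≤ ‖gradient f (x + s • v) - gradient f x‖ * ‖v‖ := real_inner_le_norm _ _
          _ ≤ (κf * ‖(x + s • v) - x‖) * ‖v‖ := by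
              gcongr; exact hlip _ _
          _ = κf * s * ‖v‖ ^ 2 := by
              rw [add_sub_cancel_left, norm_smul, Real.norm_eq_abs,
                abs_of_pos hs.1]; ring
      rw [inner_sub_left] at hip
      nlinarith [hip]
  have := hanti (Set.left_mem_Icc.2 zero_le_one) (Set.right_mem_Icc.2 zero_le_one) zero_le_one
  simp only [hh, one_smul, zero_smul, add_zero, one_pow, one_mul, zero_mul, sub_zero,
    zero_pow, mul_zero] at this
  linarith

theorem descent_inequality {n : ℕ}
    (f : EuclideanSpace ℝ (Fin n) → ℝ)
    (hconv : ConvexOn ℝ Set.univ f) (hdiff : Differentiable ℝ f)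
    (κf : ℝ) (hκf : 0 < κf)
    (hlip : ∀ x y, ‖gradient f x - gradient f y‖ ≤ κf * ‖x - y‖)
    (κg t α : ℝ) (hκg : 0 < κg) (ht : 0 ≤ t)
    (hα0 : 0 < α) (hα : α ≤ min (1 / κg) (1 / κf))
    (xk g : EuclideanSpace ℝ (Fin n))
    (herr : ‖g - gradient f xk‖ ≤ t * κg) :
    f (xk - α • g) ≤ f xk - (α / 2) * ‖gradient f xk‖ ^ 2 + (κg / 2) * t ^ 2 := by
  set G := gradient f xk with hG
  have hdesc := descent_aux f hdiff κf hκf.le hlip xk (-(α • g))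
  have hx : xk + -(α • g) = xk - α • g := by abel
  rw [hx] at hdesc
  have hin : ⟪G, -(α • g)⟫_ℝ = -(α * ⟪G, g⟫_ℝ) := by
    rw [inner_neg_right, real_inner_smul_right]
  have hnv : ‖-(α • g)‖ ^ 2 = α ^ 2 * ‖g‖ ^ 2 := by
    rw [norm_neg, norm_smul, Real.norm_eq_abs, mul_pow, sq_abs]
  rw [hin, hnv] at hdesc
  have hακf : α * κf ≤ 1 := by
    have h1 : α ≤ 1 / κf := le_trans hα (min_le_right _ _)
    rw [le_div_iff₀ hκf] at h1; linarith
  have hακg : α * κg ≤ 1 := by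
    have h1 : α ≤ 1 / κg := le_trans hα (min_le_left _ _)
    rw [le_div_iff₀ hκg] at h1; linarith
  have hsq : ‖g - G‖ ^ 2 = ‖g‖ ^ 2 - 2 * ⟪G, g⟫_ℝ + ‖G‖ ^ 2 := by
    rw [norm_sub_sq_real, real_inner_comm]
  have herr2 : ‖g - G‖ ^ 2 ≤ (t * κg) ^ 2 := by
    have := norm_nonneg (g - G)
    nlinarith [herr]
  nlinarith [hdesc, norm_nonneg g, norm_nonneg G, sq_nonneg (‖g‖), sq_nonneg t,
    mul_nonneg (sq_nonneg ‖g‖) hα0.le, mul_nonneg ht ht,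
    mul_nonneg (mul_nonneg ht ht) hκg.le,
    mul_le_of_le_one_left (mul_nonneg (mul_nonneg ht ht) hκg.le) hακg]
end

section
/- Let f : ℝⁿ → ℝ be convex and differentiable with ∇f Lipschitz continuous with constant κ_f > 0, and suppose f is bounded below by f* ∈ ℝ. Let κ_g > 0, t > 0, and 0 < α ≤ min(1/κ_g, 1/κ_f). Let (x_k) be any sequence defined by x_{k+1} = x_k − α·g_k where each g_k ∈ ℝⁿ satisfies ‖g_k − ∇f(x_k)‖ ≤ t·κ_g. Then there exists an index k ≤ (f(x_0) − f*)·α/(12·t²) such that ‖∇f(x_k)‖ ≤ 5t/α. -/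
set_option maxHeartbeats 1000000

open scoped InnerProductSpace

lemma my_descent_lemma {n : ℕ} (f : EuclideanSpace ℝ (Fin n) → ℝ)
    (hdiff : Differentiable ℝ f) (κf : ℝ)
    (hlip : ∀ x y, ‖gradient f x - gradient f y‖ ≤ κf * ‖x - y‖)
    (x v : EuclideanSpace ℝ (Fin n)) :
    f (x + v) ≤ f x + ⟪gradient f x, v⟫_ℝ + κf / 2 * ‖v‖ ^ 2 := by
  have hfd : ∀ y w, fderiv ℝ f y w = ⟪gradient f y, w⟫_ℝ := by
    intro y w
    rw [gradient, InnerProductSpace.toDual_symm_apply]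
  set φ : ℝ → ℝ := fun s => f (x + s • v) - s * ⟪gradient f x, v⟫_ℝ - κf / 2 * s ^ 2 * ‖v‖ ^ 2
    with hφdef
  have hφ : ∀ s : ℝ, HasDerivAt φ
      (⟪gradient f (x + s • v), v⟫_ℝ - ⟪gradient f x, v⟫_ℝ - κf * s * ‖v‖ ^ 2) s := by
    intro s
    have h1 : HasDerivAt (fun s : ℝ => x + s • v) v s := by
      simpa using ((hasDerivAt_id s).smul_const v).const_add x
    have h2 : HasDerivAt (fun s : ℝ => f (x + s • v)) (fderiv ℝ f (x + s • v) v) s :=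
      (hdiff _).hasFDerivAt.comp_hasDerivAt s h1
    rw [hfd] at h2
    have h3 : HasDerivAt (fun s : ℝ => s * ⟪gradient f x, v⟫_ℝ) ⟪gradient f x, v⟫_ℝ s := by
      simpa using (hasDerivAt_id s).mul_const ⟪gradient f x, v⟫_ℝ
    have h4 : HasDerivAt (fun s : ℝ => κf / 2 * s ^ 2 * ‖v‖ ^ 2) (κf * s * ‖v‖ ^ 2) s := by
      have := ((hasDerivAt_pow 2 s).const_mul (κf / 2)).mul_const (‖v‖ ^ 2)
      refine this.congr_deriv ?_
      ring
    exact (h2.sub h3).sub h4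
  have hmono : AntitoneOn φ (Set.Icc (0:ℝ) 1) := by
    apply antitoneOn_of_deriv_nonpos (convex_Icc 0 1)
    · exact (Differentiable.continuous (fun s => (hφ s).differentiableAt)).continuousOn
    · exact fun s _ => (hφ s).differentiableAt.differentiableWithinAt
    · intro s hs
      rw [interior_Icc] at hs
      rw [(hφ s).deriv]
      have hs0 : (0:ℝ) ≤ s := hs.1.le
      have hsub : ⟪gradient f (x + s • v) - gradient f x, v⟫_ℝ ≤ κf * s * ‖v‖ ^ 2 := by
        calc ⟪gradient f (x + s • v) - gradient f x, v⟫_ℝ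
            ≤ ‖gradient f (x + s • v) - gradient f x‖ * ‖v‖ := real_inner_le_norm _ _
          _ ≤ (κf * ‖x + s • v - x‖) * ‖v‖ :=
              mul_le_mul_of_nonneg_right (hlip _ _) (norm_nonneg _)
          _ = κf * s * ‖v‖ ^ 2 := by
              rw [add_sub_cancel_left, norm_smul, Real.norm_eq_abs, abs_of_nonneg hs0]
              ring
      rw [inner_sub_left] at hsub
      linarith
  have h01 := hmono (Set.left_mem_Icc.2 zero_le_one) (Set.right_mem_Icc.2 zero_le_one) zero_le_one
  simp only [hφdef, zero_smul, add_zero, one_smul, zero_mul, zero_pow, mul_zero, sub_zero,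
    one_mul, one_pow, mul_one] at h01
  linarith

theorem descent_reaches_small_gradient {n : ℕ}
    (f : EuclideanSpace ℝ (Fin n) → ℝ)
    (hconv : ConvexOn ℝ Set.univ f) (hdiff : Differentiable ℝ f)
    (κf : ℝ) (hκf : 0 < κf)
    (hlip : ∀ x y, ‖gradient f x - gradient f y‖ ≤ κf * ‖x - y‖)
    (fstar : ℝ) (hbdd : ∀ y, fstar ≤ f y)
    (κg t α : ℝ) (hκg : 0 < κg) (ht : 0 < t)
    (hα0 : 0 < α) (hα : α ≤ min (1 / κg) (1 / κf))
    (x g : ℕ → EuclideanSpace ℝ (Fin n))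
    (hstep : ∀ k, x (k + 1) = x k - α • g k)
    (herr : ∀ k, ‖g k - gradient f (x k)‖ ≤ t * κg) :
    ∃ k : ℕ, (k : ℝ) ≤ (f (x 0) - fstar) * α / (12 * t ^ 2) ∧
      ‖gradient f (x k)‖ ≤ 5 * t / α := by
  set K : ℝ := (f (x 0) - fstar) * α / (12 * t ^ 2) with hK
  have hακf : α * κf ≤ 1 := by
    have := (le_min_iff.1 hα).2
    rw [le_div_iff₀ hκf] at this
    linarith
  have hακg : α * κg ≤ 1 := by
    have := (le_min_iff.1 hα).1
    rw [le_div_iff₀ hκg] at this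
    linarith
  by_contra hcon
  push_neg at hcon
  -- per-step decrease when gradient is large
  have hstepdec : ∀ k : ℕ, 5 * t / α < ‖gradient f (x k)‖ →
      f (x (k + 1)) ≤ f (x k) - 12 * t ^ 2 / α := by
    intro k hk
    have hd := my_descent_lemma f hdiff κf hlip (x k) (-(α • g k))
    rw [← sub_eq_add_neg, ← hstep k, norm_neg] at hd
    set G := gradient f (x k) with hG
    set e := g k - G with he
    have hge : g k = G + e := by rw [he]; abel
    have hne : ‖e‖ ≤ t * κg := herr k
    set A := ‖G‖ with hA
    set B := ‖e‖ with hB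
    set c := ⟪G, e⟫_ℝ with hc
    have h1 : ⟪G, -(α • g k)⟫_ℝ = -(α * (A ^ 2 + c)) := by
      rw [inner_neg_right, real_inner_smul_right, hge, inner_add_right,
        real_inner_self_eq_norm_sq]
    have h2 : ‖α • g k‖ ^ 2 = α ^ 2 * (A ^ 2 + 2 * c + B ^ 2) := by
      rw [norm_smul, Real.norm_eq_abs, mul_pow, sq_abs, hge, norm_add_sq_real]
      try ring
    rw [h1, h2] at hd
    have hq : (0:ℝ) ≤ A ^ 2 + 2 * c + B ^ 2 := by
      have : ‖G + e‖ ^ 2 = A ^ 2 + 2 * c + B ^ 2 := norm_add_sq_real G e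
      rw [← this]; positivity
    have key : f (x (k + 1)) ≤ f (x k) - α / 2 * A ^ 2 + α / 2 * B ^ 2 := by
      have hnn : 0 ≤ (α - κf * α ^ 2) * (A ^ 2 + 2 * c + B ^ 2) :=
        mul_nonneg (by nlinarith) hq
      nlinarith [hd, hnn]
    have hA5 : 5 * t < α * A := by
      rw [div_lt_iff₀ hα0] at hk
      linarith
    have hB1 : α * B ≤ t := by
      have h := mul_le_mul_of_nonneg_left hne hα0.le
      calc α * B ≤ α * (t * κg) := h
        _ = t * (α * κg) := by ring
        _ ≤ t * 1 := mul_le_mul_of_nonneg_left hακg ht.le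
        _ = t := mul_one t
    have h25 : 25 * t ^ 2 ≤ (α * A) ^ 2 := by nlinarith
    have h1t : (α * B) ^ 2 ≤ t ^ 2 := by
      have hαB : 0 ≤ α * B := mul_nonneg hα0.le (norm_nonneg _)
      nlinarith
    have hfinal : 12 * t ^ 2 / α ≤ α / 2 * A ^ 2 - α / 2 * B ^ 2 := by
      rw [div_le_iff₀ hα0]
      nlinarith
    linarith
  set N : ℕ := ⌊K⌋₊ + 1 with hN
  have hK0 : 0 ≤ K := by
    have := hbdd (x 0)
    exact div_nonneg (mul_nonneg (by linarith) hα0.le) (by positivity)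
  have hind : ∀ m : ℕ, m ≤ N → f (x m) ≤ f (x 0) - m * (12 * t ^ 2 / α) := by
    intro m
    induction m with
    | zero => simp
    | succ m ih =>
      intro hm
      have hm' : m ≤ N := le_of_lt (Nat.lt_of_succ_le hm)
      have hmK : (m : ℝ) ≤ K := by
        have hmf : m ≤ ⌊K⌋₊ := Nat.lt_succ_iff.mp (Nat.lt_of_succ_le hm)
        calc (m : ℝ) ≤ (⌊K⌋₊ : ℝ) := Nat.cast_le.2 hmf
          _ ≤ K := Nat.floor_le hK0
      have hbig := hcon m hmK
      have := hstepdec m hbig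
      have ihm := ih hm'
      push_cast
      linarith
  have hNK : K < (N : ℝ) := by
    rw [hN]
    push_cast
    exact Nat.lt_floor_add_one K
  have hlast := hind N le_rfl
  have hKmul : K * (12 * t ^ 2 / α) = f (x 0) - fstar := by
    rw [hK]
    field_simp
  have hpos : 0 < 12 * t ^ 2 / α := by positivity
  have : f (x N) < fstar := by
    have h1 : K * (12 * t ^ 2 / α) < (N : ℝ) * (12 * t ^ 2 / α) :=
      mul_lt_mul_of_pos_right hNK hpos
    rw [hKmul] at h1
    linarith
  exact absurd (hbdd (x N)) (not_le.2 this)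
end

section
/- Let f : ℝⁿ → ℝ be convex and twice continuously differentiable with ∇f Lipschitz continuous with constant κ_f > 0 and suppose there is κ_g > 0 and ε > 0 such that a map g_ε : ℝⁿ → ℝⁿ satisfies ‖g_ε(x) − ∇f(x)‖ ≤ κ_g·ε² for all x. Let 0 < α ≤ min(1/κ_g, 1/κ_f) and consider the iteration x_{k+1} = x_k − α·g_ε(x_k). Then: (1) whenever ‖∇f(x_k)‖ ≥ 5ε²/α one has f(x_{k+1}) ≤ f(x_k) − 12·ε⁴/α; and (2) if f is bounded below, after finitely many iterations the process produces a point x* with ‖∇f(x*)‖ ≤ 5ε²/α. -/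
set_option maxHeartbeats 800000
open scoped InnerProductSpace

theorem descent_lemma {n : ℕ} (f : EuclideanSpace ℝ (Fin n) → ℝ) (hf : ContDiff ℝ 2 f)
    (κf : ℝ) (hlip : ∀ x y, ‖gradient f x - gradient f y‖ ≤ κf * ‖x - y‖)
    (x y : EuclideanSpace ℝ (Fin n)) :
    f y ≤ f x + ⟪gradient f x, y - x⟫_ℝ + κf / 2 * ‖y - x‖ ^ 2 := by
  set v := y - x with hv
  have hdf : Differentiable ℝ f := hf.differentiable (by norm_num)
  set φ' : ℝ → ℝ := fun t => fderiv ℝ f (x + t • v) v with hφ'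
  have hline : ∀ t : ℝ, HasDerivAt (fun s : ℝ => x + s • v) v t := by
    intro t
    simpa using ((hasDerivAt_id t).smul_const v).const_add x
  have hd : ∀ t : ℝ, HasDerivAt (fun s => f (x + s • v)) (φ' t) t := by
    intro t
    exact (hdf (x + t • v)).hasFDerivAt.comp_hasDerivAt t (hline t)
  have hcont : Continuous φ' := by
    have h1 : Continuous (fderiv ℝ f) := hf.continuous_fderiv (by norm_num)
    have h2 : Continuous fun t : ℝ => x + t • v := continuous_const.add (continuous_id.smul continuous_const)
    exact (isBoundedBilinearMap_apply.continuous.comp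
      ((h1.comp h2).prodMk continuous_const))
  have hFTC : f y - f x = ∫ t in (0:ℝ)..1, φ' t := by
    have := intervalIntegral.integral_eq_sub_of_hasDerivAt
      (f := fun s => f (x + s • v)) (fun t _ => hd t)
      (hcont.intervalIntegrable 0 1)
    simpa [hv] using this.symm
  have hbound : ∀ t ∈ Set.Icc (0:ℝ) 1, φ' t ≤ ⟪gradient f x, v⟫_ℝ + κf * ‖v‖ ^ 2 * t := by
    intro t ht
    have h0 : φ' t = ⟪gradient f (x + t • v), v⟫_ℝ := by simp [hφ', gradient]
    have h1 : ⟪gradient f (x + t • v) - gradient f x, v⟫_ℝ ≤ κf * ‖v‖ ^ 2 * t := by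
      calc ⟪gradient f (x + t • v) - gradient f x, v⟫_ℝ
          ≤ ‖gradient f (x + t • v) - gradient f x‖ * ‖v‖ := real_inner_le_norm _ _
        _ ≤ (κf * ‖x + t • v - x‖) * ‖v‖ := by
            exact mul_le_mul_of_nonneg_right (hlip _ _) (norm_nonneg _)
        _ = κf * ‖v‖ ^ 2 * t := by
            have : ‖x + t • v - x‖ = t * ‖v‖ := by
              simp [norm_smul, abs_of_nonneg ht.1]
            rw [this]; ring
    have := inner_sub_left (𝕜 := ℝ) (gradient f (x + t • v)) (gradient f x) v
    rw [h0]
    linarith [h1, this.symm.le, this.le]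
  have hInt : (∫ t in (0:ℝ)..1, φ' t) ≤
      ∫ t in (0:ℝ)..1, (⟪gradient f x, v⟫_ℝ + κf * ‖v‖ ^ 2 * t) := by
    apply intervalIntegral.integral_mono_on (by norm_num)
      (hcont.intervalIntegrable 0 1)
      ((continuous_const.add (continuous_const.mul continuous_id)).intervalIntegrable 0 1)
    exact hbound
  have hcalc : (∫ t in (0:ℝ)..1, (⟪gradient f x, v⟫_ℝ + κf * ‖v‖ ^ 2 * t))
      = ⟪gradient f x, v⟫_ℝ + κf / 2 * ‖v‖ ^ 2 := by
    rw [intervalIntegral.integral_add (f := fun _ => ⟪gradient f x, v⟫_ℝ) (g := fun t => κf * ‖v‖ ^ 2 * t) intervalIntegrable_const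
      ((continuous_const.mul continuous_id').intervalIntegrable 0 1)]
    rw [intervalIntegral.integral_const_mul, integral_id]
    simp
    ring
  nlinarith [hFTC, hInt, hcalc.le, hcalc.ge]

theorem hgrad_convergence_corollary {n : ℕ}
    (f : EuclideanSpace ℝ (Fin n) → ℝ)
    (hconv : ConvexOn ℝ Set.univ f) (hf : ContDiff ℝ 2 f)
    (κf : ℝ) (hκf : 0 < κf)
    (hlip : ∀ x y, ‖gradient f x - gradient f y‖ ≤ κf * ‖x - y‖)
    (κg ε : ℝ) (hκg : 0 < κg) (hε : 0 < ε)
    (gε : EuclideanSpace ℝ (Fin n) → EuclideanSpace ℝ (Fin n))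
    (hacc : ∀ x, ‖gε x - gradient f x‖ ≤ κg * ε ^ 2)
    (α : ℝ) (hα0 : 0 < α) (hα : α ≤ min (1 / κg) (1 / κf))
    (x : ℕ → EuclideanSpace ℝ (Fin n))
    (hiter : ∀ k, x (k + 1) = x k - α • gε (x k)) :
    (∀ k, 5 * ε ^ 2 / α ≤ ‖gradient f (x k)‖ →
      f (x (k + 1)) ≤ f (x k) - 12 * ε ^ 4 / α) ∧
    (∀ fstar : ℝ, (∀ y, fstar ≤ f y) →
      ∃ k, ‖gradient f (x k)‖ ≤ 5 * ε ^ 2 / α) := by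
  have hκfα : κf * α ≤ 1 := by
    have h := hα.trans (min_le_right _ _)
    rw [le_div_iff₀ hκf] at h; linarith
  have hκgα : α * κg ≤ 1 := by
    have h := hα.trans (min_le_left _ _)
    rw [le_div_iff₀ hκg] at h; linarith
  have part1 : ∀ k, 5 * ε ^ 2 / α ≤ ‖gradient f (x k)‖ →
      f (x (k + 1)) ≤ f (x k) - 12 * ε ^ 4 / α := by
    intro k hk
    set G := gradient f (x k) with hG
    set g := gε (x k) with hg
    have hd := descent_lemma f hf κf hlip (x k) (x (k + 1))
    have hdiff : x (k + 1) - x k = -(α • g) := by rw [hiter k]; abel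
    rw [hdiff] at hd
    have hip : ⟪G, -(α • g)⟫_ℝ = -(α * ⟪G, g⟫_ℝ) := by
      rw [inner_neg_right, real_inner_smul_right]
    have hnorm : ‖-(α • g)‖ = α * ‖g‖ := by
      rw [norm_neg, norm_smul]; simp [abs_of_pos hα0]
    rw [hip, hnorm] at hd
    have hid : ‖g - G‖ ^ 2 = ‖g‖ ^ 2 - 2 * ⟪G, g⟫_ℝ + ‖G‖ ^ 2 := by
      rw [norm_sub_sq_real, real_inner_comm]
    -- step 1: f x(k+1) ≤ f x k + α/2 * (‖g - G‖^2 - ‖G‖^2)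
    have h1 : f (x (k + 1)) ≤ f (x k) + α / 2 * (‖g - G‖ ^ 2 - ‖G‖ ^ 2) := by
      nlinarith [hd, hid, hκfα, hα0, sq_nonneg ‖g‖, sq_nonneg (α * ‖g‖),
        mul_nonneg hα0.le (sq_nonneg ‖g‖)]
    -- step 2: bounds
    have he : ‖g - G‖ ≤ κg * ε ^ 2 := hacc (x k)
    have heα : α * ‖g - G‖ ≤ ε ^ 2 := by
      calc α * ‖g - G‖ ≤ α * (κg * ε ^ 2) := by
            exact mul_le_mul_of_nonneg_left he hα0.le
        _ ≤ ε ^ 2 := by nlinarith [sq_nonneg ε]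
    have hGα : 5 * ε ^ 2 ≤ α * ‖G‖ := by
      rw [div_le_iff₀ hα0] at hk; linarith
    have he2 : (α * ‖g - G‖) ^ 2 ≤ ε ^ 4 := by
      nlinarith [mul_nonneg hα0.le (norm_nonneg (g - G)), sq_nonneg ε]
    have hG2 : 25 * ε ^ 4 ≤ (α * ‖G‖) ^ 2 := by
      nlinarith [sq_nonneg ε, mul_nonneg hα0.le (norm_nonneg G)]
    have h2 : 12 * ε ^ 4 / α ≤ α / 2 * (‖G‖ ^ 2 - ‖g - G‖ ^ 2) := by
      rw [div_le_iff₀ hα0]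
      nlinarith [he2, hG2]
    linarith [h1, h2]
  refine ⟨part1, ?_⟩
  intro fstar hfstar
  by_contra hcon
  push_neg at hcon
  set c : ℝ := 12 * ε ^ 4 / α with hc
  have hcpos : 0 < c := by positivity
  have hdec : ∀ k : ℕ, f (x k) ≤ f (x 0) - k * c := by
    intro k
    induction k with
    | zero => simp
    | succ k ih =>
      have := part1 k (hcon k).le
      push_cast
      linarith
  obtain ⟨k, hk⟩ := exists_nat_gt ((f (x 0) - fstar) / c)
  have h1 := hdec k
  have h2 := hfstar (x k)
  rw [div_lt_iff₀ hcpos] at hk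
  linarith
end

section
/- Let n ≥ 1, ε > 0, and let Δ be a symmetric n×n real matrix. Set M = ε⁴·vol(B_ε)/((n+2)(n+4)). Then ∫_{B_ε(0)} (τᵀΔτ)² dτ = M·( 2·‖Δ‖_F² + (tr Δ)² ), and in particular ∫_{B_ε(0)} (τᵀΔτ)² dτ ≥ M·‖Δ‖_F². -/
open MeasureTheory Metric
open Real Filter
open scoped ENNReal


noncomputable def Mm (c : ℕ) : ℝ := ∫ t : ℝ, t ^ c * Real.exp (-t ^ 2)
noncomputable def Kk (p : ℕ) : ℝ := ∫ r in Set.Ioi (0:ℝ), r ^ p * Real.exp (-r ^ 2)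

lemma integrable_mom (c : ℕ) : Integrable fun t : ℝ => t ^ c * Real.exp (-t ^ 2) := by
  have h := integrable_rpow_mul_exp_neg_mul_sq (b := 1) one_pos
    (s := (c : ℝ)) (by exact_mod_cast neg_one_lt_zero.trans_le (Nat.cast_nonneg c))
  simpa [Real.rpow_natCast] using h

lemma hasDerivAt_aux (c : ℕ) (t : ℝ) :
    HasDerivAt (fun t : ℝ => -(1/2) * t ^ (c+1) * Real.exp (-t ^ 2))
      (t ^ (c+2) * Real.exp (-t ^ 2) - ((c+1)/2) * (t ^ c * Real.exp (-t ^ 2))) t := by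
  have h1 : HasDerivAt (fun t : ℝ => t ^ (c+1)) ((c+1) * t ^ c) t := by
    simpa using hasDerivAt_pow (c+1) t
  have h2 : HasDerivAt (fun t : ℝ => Real.exp (-t ^ 2)) ((-2*t) * Real.exp (-t ^ 2)) t := by
    have : HasDerivAt (fun t : ℝ => -t ^ 2) (-2*t) t := by
      simpa using (hasDerivAt_pow 2 t).fun_neg
    simpa [mul_comm] using this.exp
  have := ((h1.const_mul (-(1/2) : ℝ)).fun_mul h2)
  exact this.congr_deriv (by push_cast; ring)

lemma mom_rec (c : ℕ) : Mm (c+2) = ((c+1)/2) * Mm c := by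
  have hz := integral_eq_zero_of_hasDerivAt_of_integrable (hasDerivAt_aux c)
    ((integrable_mom (c+2)).sub ((integrable_mom c).const_mul _))
    (by simpa [mul_assoc] using (integrable_mom (c+1)).const_mul (-(1/2) : ℝ))
  rw [integral_sub (integrable_mom (c+2)) ((integrable_mom c).const_mul _),
    integral_const_mul] at hz
  have : Mm (c+2) - ((c+1)/2) * Mm c = 0 := by
    simpa [Mm] using hz
  linarith

lemma mom_one : Mm 1 = 0 := by
  have h : ∀ t : ℝ, HasDerivAt (fun t : ℝ => -(1/2) * Real.exp (-t ^ 2))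
      (t ^ 1 * Real.exp (-t ^ 2)) t := by
    intro t
    have : HasDerivAt (fun t : ℝ => -t ^ 2) (-2*t) t := by
      simpa using (hasDerivAt_pow 2 t).fun_neg
    have := (this.exp).const_mul (-(1/2) : ℝ)
    exact this.congr_deriv (by ring)
  have hz := integral_eq_zero_of_hasDerivAt_of_integrable h (integrable_mom 1)
    (by simpa using (integrable_exp_neg_mul_sq one_pos).const_mul (-(1/2) : ℝ))
  simpa [Mm] using hz

lemma mom_zero : Mm 0 = Real.sqrt π := by
  have := integral_gaussian 1
  simpa [Mm] using this

lemma mom_two : Mm 2 = Real.sqrt π / 2 := by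
  have := mom_rec 0
  rw [mom_zero] at this; norm_num at this; linarith

lemma mom_three : Mm 3 = 0 := by
  have := mom_rec 1
  rw [mom_one] at this; simpa using this

lemma mom_four : Mm 4 = 3 * Real.sqrt π / 4 := by
  have := mom_rec 2
  rw [mom_two] at this; norm_num at this; linarith

lemma tendsto_aux (k : ℕ) :
    Tendsto (fun t : ℝ => t ^ k * Real.exp (-t ^ 2)) atTop (nhds 0) := by
  have h := rpow_mul_exp_neg_mul_sq_isLittleO_exp_neg one_pos (k : ℝ)
  have hhalf : Tendsto (fun x : ℝ => -(1/2) * x) atTop atBot := by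
    have h1 := (tendsto_const_mul_atTop_of_pos (show (0:ℝ) < 1/2 by norm_num)).2
      (tendsto_id (α := ℝ))
    exact (tendsto_neg_atTop_atBot.comp h1).congr fun x => by
      show -((1:ℝ)/2 * x) = -(1/2) * x; ring
  have h2 := Real.tendsto_exp_atBot.comp hhalf
  have := h.isBigO.trans_tendsto h2
  refine this.congr' ?_
  filter_upwards [eventually_gt_atTop (0:ℝ)] with x hx
  rw [Real.rpow_natCast]; ring_nf

lemma K_rec (p : ℕ) : Kk (p+2) = ((p+1)/2) * Kk p := by
  have hz := integral_Ioi_of_hasDerivAt_of_tendsto (a := (0:ℝ))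
    (f := fun t : ℝ => -(1/2) * t ^ (p+1) * Real.exp (-t ^ 2))
    (f' := fun t => t ^ (p+2) * Real.exp (-t ^ 2) - ((p+1)/2) * (t ^ p * Real.exp (-t ^ 2)))
    (m := 0)
    (by apply Continuous.continuousWithinAt; continuity)
    (fun x _ => hasDerivAt_aux p x)
    (((integrable_mom (p+2)).sub ((integrable_mom p).const_mul _)).integrableOn)
    ?_
  · rw [integral_sub ((integrable_mom (p+2)).integrableOn)
      (((integrable_mom p).const_mul _).integrableOn), integral_const_mul] at hz
    have h0 : Kk (p+2) - ((p+1)/2) * Kk p = 0 := by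
      simpa [Kk, zero_pow] using hz
    linarith
  · have := (tendsto_aux (p+1)).const_mul (-(1/2) : ℝ)
    simpa [mul_assoc] using this



variable {n : ℕ}

def cnt (i j k l m : Fin n) : ℕ :=
  (if m = i then 1 else 0) + (if m = j then 1 else 0) +
  (if m = k then 1 else 0) + (if m = l then 1 else 0)

lemma prod_one_supp (f : Fin n → ℕ) (i : Fin n) (h : ∀ m, m ≠ i → f m = 0) :
    ∏ m, Mm (f m) = Mm (f i) * Mm 0 ^ (n - 1) := by
  rw [← Finset.mul_prod_erase Finset.univ _ (Finset.mem_univ i)]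
  congr 1
  rw [Finset.prod_congr rfl (fun m hm => by rw [h m (Finset.ne_of_mem_erase hm)]),
    Finset.prod_const, Finset.card_erase_of_mem (Finset.mem_univ i), Finset.card_univ,
    Fintype.card_fin]

lemma prod_two_supp (f : Fin n → ℕ) (i k : Fin n) (hik : i ≠ k)
    (h : ∀ m, m ≠ i → m ≠ k → f m = 0) :
    ∏ m, Mm (f m) = Mm (f i) * Mm (f k) * Mm 0 ^ (n - 2) := by
  rw [← Finset.mul_prod_erase Finset.univ _ (Finset.mem_univ i),
    ← Finset.mul_prod_erase _ _ (Finset.mem_erase.2 ⟨hik.symm, Finset.mem_univ k⟩)]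
  rw [Finset.prod_congr rfl (fun m hm => by
      rw [h m (Finset.ne_of_mem_erase (Finset.mem_of_mem_erase hm)) (Finset.ne_of_mem_erase hm)]),
    Finset.prod_const, Finset.card_erase_of_mem
      (Finset.mem_erase.2 ⟨hik.symm, Finset.mem_univ k⟩),
    Finset.card_erase_of_mem (Finset.mem_univ i), Finset.card_univ, Fintype.card_fin,
    show n - 1 - 1 = n - 2 from by omega]
  ring

lemma pair_val (i k : Fin n) (hik : i ≠ k) :
    Mm 2 * Mm 2 * Mm 0 ^ (n - 2) = Real.sqrt π ^ n / 4 := by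
  have h2 : 2 ≤ n := by
    rw [← Fintype.card_fin n]
    exact Fintype.one_lt_card_iff.2 ⟨i, k, hik⟩
  have hn : n - 2 + 2 = n := by omega
  rw [mom_two, mom_zero]
  conv_rhs => rw [← hn]
  rw [pow_add]
  ring

lemma wick (i j k l : Fin n) :
    ∏ m, Mm (cnt i j k l m) = Real.sqrt π ^ n / 4 *
      ((if i = j then (1:ℝ) else 0) * (if k = l then 1 else 0) +
       (if i = k then (1:ℝ) else 0) * (if j = l then 1 else 0) +
       (if i = l then (1:ℝ) else 0) * (if j = k then 1 else 0)) := by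
  by_cases hij : i = j
  · subst hij
    by_cases hik : i = k
    · subst hik
      by_cases hil : i = l
      · subst hil
        rw [prod_one_supp _ i (fun m hm => by simp [cnt, hm]),
          show cnt i i i i i = 4 by simp [cnt], mom_four, mom_zero]
        have hn1 : n - 1 + 1 = n := Nat.succ_pred_eq_of_pos i.pos
        have hpow : Real.sqrt π ^ n = Real.sqrt π ^ (n-1) * Real.sqrt π := by
          rw [← pow_succ, hn1]
        rw [hpow]
        simp
        ring
      · rw [Finset.prod_eq_zero (Finset.mem_univ i)
          (by rw [show cnt i i i l i = 3 by simp [cnt, hil]]; exact mom_three)]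
        simp [hil]
    · by_cases hkl : k = l
      · subst hkl
        rw [prod_two_supp _ i k hik (fun m hmi hmk => by simp [cnt, hmi, hmk]),
          show cnt i i k k i = 2 by simp [cnt, hik],
          show cnt i i k k k = 2 by simp [cnt, Ne.symm hik], pair_val i k hik]
        simp [hik]
      · by_cases hil : i = l
        · subst hil
          rw [Finset.prod_eq_zero (Finset.mem_univ k)
            (by rw [show cnt i i k i k = 1 by simp [cnt, Ne.symm hik]]; exact mom_one)]
          simp [hik, hkl, Ne.symm hik]
        · rw [Finset.prod_eq_zero (Finset.mem_univ l)
            (by rw [show cnt i i k l l = 1 by simp [cnt, Ne.symm hil, Ne.symm hkl]]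
                exact mom_one)]
          simp [hik, hkl, hil]
  · by_cases hkl : k = l
    · subst hkl
      by_cases hjk : j = k
      · subst hjk
        rw [Finset.prod_eq_zero (Finset.mem_univ j)
          (by rw [show cnt i j j j j = 3 by simp [cnt, Ne.symm hij]]; exact mom_three)]
        have hik : ¬ i = j := hij
        simp [hij, hik]
      · rw [Finset.prod_eq_zero (Finset.mem_univ j)
          (by rw [show cnt i j k k j = 1 by simp [cnt, Ne.symm hij, hjk]]; exact mom_one)]
        simp [hij, hjk]
    · by_cases hik : i = k
      · subst hik
        by_cases hjl : j = l
        · subst hjl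
          rw [prod_two_supp _ i j hij (fun m hmi hmj => by simp [cnt, hmi, hmj]),
            show cnt i j i j i = 2 by simp [cnt, hij],
            show cnt i j i j j = 2 by simp [cnt, Ne.symm hij], pair_val i j hij]
          simp [hij]
        · have hil : ¬ i = l := fun h => hkl (h.symm ▸ rfl)
          rw [Finset.prod_eq_zero (Finset.mem_univ l)
            (by rw [show cnt i j i l l = 1 by simp [cnt, Ne.symm hil, Ne.symm hjl]]
                exact mom_one)]
          simp [hij, hjl, hil]
      · by_cases hil : i = l
        · subst hil
          by_cases hjk : j = k
          · subst hjk
            rw [prod_two_supp _ i j hij (fun m hmi hmj => by simp [cnt, hmi, hmj]),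
              show cnt i j j i i = 2 by simp [cnt, hij],
              show cnt i j j i j = 2 by simp [cnt, Ne.symm hij], pair_val i j hij]
            simp [hij, hik]
          · rw [Finset.prod_eq_zero (Finset.mem_univ k)
              (by rw [show cnt i j k i k = 1 by simp [cnt, Ne.symm hik, Ne.symm hjk]]
                  exact mom_one)]
            simp [hij, hik, hjk]
        · rw [Finset.prod_eq_zero (Finset.mem_univ i)
            (by rw [show cnt i j k l i = 1 by simp [cnt, hij, hik, hil]]; exact mom_one)]
          simp [hij, hik, hil]



variable {n : ℕ}



lemma prod_pow_cnt (i j k l : Fin n) (y : Fin n → ℝ) :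
    ∏ m, (y m) ^ (cnt i j k l m) = y i * y j * y k * y l := by
  simp only [cnt, pow_add, Finset.prod_mul_distrib, pow_ite, pow_one, pow_zero,
    Finset.prod_ite_eq', Finset.mem_univ, if_true]

lemma pointwise_expand (Δ : Matrix (Fin n) (Fin n) ℝ) (y : Fin n → ℝ) :
    (∑ i, ∑ j, y i * Δ i j * y j) ^ 2 * ∏ m, Real.exp (-(y m) ^ 2) =
      ∑ i, ∑ j, ∑ k, ∑ l, Δ i j * Δ k l *
        ∏ m, ((y m) ^ (cnt i j k l m) * Real.exp (-(y m) ^ 2)) := by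
  have expand : (∑ i, ∑ j, y i * Δ i j * y j) ^ 2 =
      ∑ i, ∑ j, ∑ k, ∑ l, (y i * Δ i j * y j) * (y k * Δ k l * y l) := by
    rw [sq, Finset.sum_mul_sum]
    refine Finset.sum_congr rfl fun i _ => ?_
    rw [Finset.sum_comm]
    refine Finset.sum_congr rfl fun j _ => ?_
    rw [Finset.sum_mul_sum]
  rw [expand, Finset.sum_mul]
  refine Finset.sum_congr rfl fun i _ => ?_
  rw [Finset.sum_mul]
  refine Finset.sum_congr rfl fun j _ => ?_
  rw [Finset.sum_mul]
  refine Finset.sum_congr rfl fun k _ => ?_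
  rw [Finset.sum_mul]
  refine Finset.sum_congr rfl fun l _ => ?_
  rw [Finset.prod_mul_distrib, prod_pow_cnt]
  ring

lemma integrable_term (Δ : Matrix (Fin n) (Fin n) ℝ) (i j k l : Fin n) :
    Integrable (fun y : Fin n → ℝ => Δ i j * Δ k l *
      ∏ m, ((y m) ^ (cnt i j k l m) * Real.exp (-(y m) ^ 2))) :=
  (Integrable.fintype_prod (f := fun m t => t ^ (cnt i j k l m) * Real.exp (-t ^ 2))
    (fun m => integrable_mom _)).const_mul _

lemma gauss_pi_integrable (Δ : Matrix (Fin n) (Fin n) ℝ) :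
    Integrable (fun y : Fin n → ℝ =>
      (∑ i, ∑ j, y i * Δ i j * y j) ^ 2 * ∏ m, Real.exp (-(y m) ^ 2)) := by
  have : (fun y : Fin n → ℝ =>
      (∑ i, ∑ j, y i * Δ i j * y j) ^ 2 * ∏ m, Real.exp (-(y m) ^ 2)) =
      fun y => ∑ i, ∑ j, ∑ k, ∑ l, Δ i j * Δ k l *
        ∏ m, ((y m) ^ (cnt i j k l m) * Real.exp (-(y m) ^ 2)) := by
    funext y; exact pointwise_expand Δ y
  rw [this]
  exact integrable_finset_sum _ fun i _ => integrable_finset_sum _ fun j _ =>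
    integrable_finset_sum _ fun k _ => integrable_finset_sum _ fun l _ =>
      integrable_term Δ i j k l

lemma gauss_pi_value (Δ : Matrix (Fin n) (Fin n) ℝ) :
    ∫ y : Fin n → ℝ,
      (∑ i, ∑ j, y i * Δ i j * y j) ^ 2 * ∏ m, Real.exp (-(y m) ^ 2) =
    Real.sqrt π ^ n / 4 *
      ((∑ i, Δ i i) ^ 2 + (∑ i, ∑ j, Δ i j ^ 2) + ∑ i, ∑ j, Δ i j * Δ j i) := by
  have h1 : ∫ y : Fin n → ℝ,
      (∑ i, ∑ j, y i * Δ i j * y j) ^ 2 * ∏ m, Real.exp (-(y m) ^ 2) =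
      ∑ i, ∑ j, ∑ k, ∑ l, Δ i j * Δ k l * ∏ m, Mm (cnt i j k l m) := by
    rw [show (fun y : Fin n → ℝ =>
        (∑ i, ∑ j, y i * Δ i j * y j) ^ 2 * ∏ m, Real.exp (-(y m) ^ 2)) =
        fun y => ∑ i, ∑ j, ∑ k, ∑ l, Δ i j * Δ k l *
          ∏ m, ((y m) ^ (cnt i j k l m) * Real.exp (-(y m) ^ 2))
      from funext fun y => pointwise_expand Δ y]
    rw [integral_finset_sum _ fun i _ => integrable_finset_sum _ fun j _ =>
      integrable_finset_sum _ fun k _ => integrable_finset_sum _ fun l _ =>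
        integrable_term Δ i j k l]
    refine Finset.sum_congr rfl fun i _ => ?_
    rw [integral_finset_sum _ fun j _ => integrable_finset_sum _ fun k _ =>
      integrable_finset_sum _ fun l _ => integrable_term Δ i j k l]
    refine Finset.sum_congr rfl fun j _ => ?_
    rw [integral_finset_sum _ fun k _ => integrable_finset_sum _ fun l _ =>
      integrable_term Δ i j k l]
    refine Finset.sum_congr rfl fun k _ => ?_
    rw [integral_finset_sum _ fun l _ => integrable_term Δ i j k l]
    refine Finset.sum_congr rfl fun l _ => ?_
    rw [integral_const_mul,
      volume_pi, MeasureTheory.integral_fintype_prod_eq_prod (ι := Fin n)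
        (f := fun m t => t ^ (cnt i j k l m) * Real.exp (-t ^ 2))]
    rfl
  rw [h1]
  have h2 : ∀ i j k l : Fin n, Δ i j * Δ k l * ∏ m, Mm (cnt i j k l m) =
      Real.sqrt π ^ n / 4 *
      (Δ i j * Δ k l * ((if i = j then (1:ℝ) else 0) * (if k = l then 1 else 0)) +
       Δ i j * Δ k l * ((if i = k then (1:ℝ) else 0) * (if j = l then 1 else 0)) +
       Δ i j * Δ k l * ((if i = l then (1:ℝ) else 0) * (if j = k then 1 else 0))) := by
    intro i j k l; rw [wick]; ring
  simp only [h2, ← Finset.mul_sum]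
  congr 1
  simp only [Finset.sum_add_distrib]
  congr 1
  congr 1
  · -- trace term
    simp only [ite_mul, mul_ite, mul_one, mul_zero, one_mul, zero_mul,
      Finset.sum_ite_eq, Finset.sum_ite_eq', Finset.mem_univ, if_true,
      Finset.sum_ite_irrel, Finset.sum_const_zero]
    rw [sq, Finset.sum_mul_sum]
  · -- frobenius term
    simp only [ite_mul, mul_ite, mul_one, mul_zero, one_mul, zero_mul,
      Finset.sum_ite_eq, Finset.sum_ite_eq', Finset.mem_univ, if_true,
      Finset.sum_ite_irrel, Finset.sum_const_zero, sq]
  · -- transpose term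
    simp only [ite_mul, mul_ite, mul_one, mul_zero, one_mul, zero_mul,
      Finset.sum_ite_eq, Finset.sum_ite_eq', Finset.mem_univ, if_true,
      Finset.sum_ite_irrel, Finset.sum_const_zero]



variable {n : ℕ}

local notation "Es" => EuclideanSpace ℝ (Fin n)

lemma integrable_2r : Integrable fun r : ℝ => 2 * r * Real.exp (-r ^ 2) := by
  have := (integrable_mom 1).const_mul 2
  simpa [mul_assoc] using this

lemma exp_tail (a : ℝ) : ∫ r in Set.Ioi a, 2 * r * Real.exp (-r ^ 2) = Real.exp (-a ^ 2) := by
  have hderiv : ∀ x ∈ Set.Ioi a, HasDerivAt (fun r : ℝ => -Real.exp (-r ^ 2))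
      (2 * x * Real.exp (-x ^ 2)) x := by
    intro x _
    have h : HasDerivAt (fun r : ℝ => -r ^ 2) (-2*x) x := by
      simpa using (hasDerivAt_pow 2 x).fun_neg
    have := h.exp.fun_neg
    exact this.congr_deriv (by ring)
  have htop : Tendsto (fun r : ℝ => -Real.exp (-r ^ 2)) atTop (nhds 0) := by
    have h0 : Tendsto (fun r : ℝ => Real.exp (-r ^ 2)) atTop (nhds 0) := by
      have h := rpow_mul_exp_neg_mul_sq_isLittleO_exp_neg one_pos (0 : ℝ)
      have hhalf : Tendsto (fun x : ℝ => -(1/2) * x) atTop atBot := by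
        have h1 := (tendsto_const_mul_atTop_of_pos (show (0:ℝ) < 1/2 by norm_num)).2
          (tendsto_id (α := ℝ))
        exact (tendsto_neg_atTop_atBot.comp h1).congr fun x => by
          show -((1:ℝ)/2 * x) = -(1/2) * x; ring
      have h2 := Real.tendsto_exp_atBot.comp hhalf
      have := h.isBigO.trans_tendsto h2
      refine this.congr' ?_
      filter_upwards [eventually_gt_atTop (0:ℝ)] with x hx
      rw [Real.rpow_zero]; ring_nf
    simpa using h0.neg
  have := integral_Ioi_of_hasDerivAt_of_tendsto (a := a)
    (by apply Continuous.continuousWithinAt; continuity) hderiv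
    integrable_2r.integrableOn htop
  rw [this]; simp

lemma norm_sq_eq (x : Es) : ‖x‖ ^ 2 = ∑ m, (x m) ^ 2 := by
  rw [EuclideanSpace.norm_eq, Real.sq_sqrt (by positivity)]
  simp [sq_abs]

lemma exp_norm_eq (x : Es) : Real.exp (-‖x‖ ^ 2) = ∏ m, Real.exp (-(x m) ^ 2) := by
  rw [norm_sq_eq, ← Real.exp_sum]
  congr 1
  rw [← Finset.sum_neg_distrib]

lemma transfer_integral (g : (Fin n → ℝ) → ℝ) :
    ∫ x : Es, g (fun i => x i) = ∫ y : Fin n → ℝ, g y :=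
  (EuclideanSpace.volume_preserving_symm_measurableEquiv_toLp (Fin n)).integral_comp' g

lemma transfer_integrable (g : (Fin n → ℝ) → ℝ) (hg : Integrable g) :
    Integrable (fun x : Es => g (fun i => x i)) := by
  have := ((EuclideanSpace.volume_preserving_symm_measurableEquiv_toLp (Fin n)).integrable_comp_emb
    (MeasurableEquiv.measurableEmbedding _)).2 hg
  exact this

lemma scaling (f : Es → ℝ) (d : ℕ)
    (hhom : ∀ c : ℝ, 0 < c → ∀ x, f (c • x) = c ^ d * f x)
    {ε r : ℝ} (hε : 0 < ε) (hr : 0 < r) :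
    ∫ x in closedBall (0:Es) r, f x = (r/ε) ^ (n+d) * ∫ x in closedBall (0:Es) ε, f x := by
  set c : ℝ := r / ε with hcdef
  have hc : 0 < c := div_pos hr hε
  have key := MeasureTheory.Measure.integral_comp_smul (volume : Measure Es)
    ((closedBall (0:Es) r).indicator f) c
  have h1 : ∀ x : Es, (closedBall (0:Es) r).indicator f (c • x) =
      c ^ d * (closedBall (0:Es) ε).indicator f x := by
    intro x
    have hmem : c • x ∈ closedBall (0:Es) r ↔ x ∈ closedBall (0:Es) ε := by
      rw [mem_closedBall_zero_iff, mem_closedBall_zero_iff, norm_smul,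
        Real.norm_eq_abs, abs_of_pos hc]
      rw [hcdef]
      constructor
      · intro h
        have h2 := mul_le_mul_of_nonneg_right h (le_of_lt (div_pos hε hr))
        calc ‖x‖ = r/ε * ‖x‖ * (ε/r) := by field_simp
          _ ≤ r * (ε/r) := h2
          _ = ε := by field_simp
      · intro h
        calc r/ε * ‖x‖ ≤ r/ε * ε := by
              exact mul_le_mul_of_nonneg_left h (le_of_lt hc)
          _ = r := by field_simp
    by_cases hx : x ∈ closedBall (0:Es) ε
    · rw [Set.indicator_of_mem (hmem.2 hx) f, Set.indicator_of_mem hx f, hhom c hc]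
    · rw [Set.indicator_of_notMem (fun h => hx (hmem.1 h)) f,
        Set.indicator_of_notMem hx f, mul_zero]
  simp only [h1] at key
  rw [MeasureTheory.integral_const_mul, integral_indicator measurableSet_closedBall,
    integral_indicator measurableSet_closedBall, smul_eq_mul] at key
  rw [finrank_euclideanSpace_fin, abs_of_pos (by positivity)] at key
  have hcn : (0:ℝ) < c ^ n := by positivity
  rw [pow_add]
  field_simp at key ⊢
  linarith [key]

lemma setint_ball_closedBall (hn : 1 ≤ n) (f : Es → ℝ) {r : ℝ} :
    ∫ x in ball (0:Es) r, f x = ∫ x in closedBall (0:Es) r, f x := by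
  haveI : Nontrivial Es := by
    apply Module.nontrivial_of_finrank_pos (R := ℝ)
    rw [finrank_euclideanSpace_fin]; omega
  apply setIntegral_congr_set
  rw [MeasureTheory.ae_eq_set]
  constructor
  · simp [Set.diff_eq_empty.2 ball_subset_closedBall]
  · refine measure_mono_null (fun x hx => ?_) (Measure.addHaar_sphere volume (0:Es) r)
    rcases hx with ⟨h1, h2⟩
    rw [mem_closedBall_zero_iff] at h1
    rw [mem_ball_zero_iff] at h2
    rw [mem_sphere_zero_iff_norm]
    exact le_antisymm h1 (not_lt.1 h2)

lemma layercake (hn : 1 ≤ n) (f : Es → ℝ) (hf : Continuous f) (hpos : ∀ x, 0 ≤ f x) (d : ℕ)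
    (hhom : ∀ c : ℝ, 0 < c → ∀ x, f (c • x) = c ^ d * f x)
    (hint : Integrable fun x : Es => f x * Real.exp (-‖x‖ ^ 2))
    {ε : ℝ} (hε : 0 < ε) :
    ∫ x : Es, f x * Real.exp (-‖x‖ ^ 2) =
      (∫ x in closedBall (0:Es) ε, f x) / ε ^ (n+d) * (2 * Kk (n+d+1)) := by
  set A : ℝ := ∫ x in closedBall (0:Es) ε, f x with hAdef
  have hA0 : 0 ≤ A := setIntegral_nonneg measurableSet_closedBall (fun x _ => hpos x)
  set H : Es → ℝ → ℝ≥0∞ := fun x r =>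
    (Set.Ioi ‖x‖).indicator (fun r => ENNReal.ofReal (f x * (2 * r * Real.exp (-r ^ 2)))) r
    with hHdef
  -- claim 1
  have claim1 : ∀ x : Es, ∫⁻ r in Set.Ioi (0:ℝ), H x r
      = ENNReal.ofReal (f x * Real.exp (-‖x‖ ^ 2)) := by
    intro x
    rw [hHdef]
    rw [lintegral_indicator measurableSet_Ioi, Measure.restrict_restrict measurableSet_Ioi,
      Set.inter_eq_left.2 (Set.Ioi_subset_Ioi (norm_nonneg x))]
    rw [← MeasureTheory.ofReal_integral_eq_lintegral_ofReal
      ((integrable_2r.const_mul (f x)).integrableOn)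
      ((ae_restrict_iff' measurableSet_Ioi).2 (Filter.Eventually.of_forall (fun r hr => by
        have hr0 : 0 ≤ r := le_trans (norm_nonneg x) (le_of_lt hr)
        have : 0 ≤ 2 * r * Real.exp (-r ^ 2) := by positivity
        exact mul_nonneg (hpos x) this)))]
    rw [MeasureTheory.integral_const_mul, exp_tail]
  -- measurability for swap
  have hmeas : AEMeasurable (fun p : Es × ℝ => H p.1 p.2)
      ((volume : Measure Es).prod ((volume : Measure ℝ).restrict (Set.Ioi 0))) := by
    have heq : (fun p : Es × ℝ => H p.1 p.2) = fun p : Es × ℝ =>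
        if ‖p.1‖ < p.2 then ENNReal.ofReal (f p.1 * (2 * p.2 * Real.exp (-p.2 ^ 2))) else 0 := by
      funext p
      rw [hHdef]; simp [Set.indicator_apply, Set.mem_Ioi]
    rw [heq]
    apply Measurable.aemeasurable
    apply Measurable.ite
    · exact measurableSet_lt (continuous_fst.norm.measurable) (continuous_snd.measurable)
    · apply ENNReal.measurable_ofReal.comp
      exact ((hf.comp continuous_fst).mul (((continuous_const.mul continuous_snd)).mul
        (((continuous_snd.pow 2).neg).rexp))).measurable
    · exact measurable_const
  -- claim 3
  have claim3 : ∀ r : ℝ, r ∈ Set.Ioi (0:ℝ) → ∫⁻ x : Es, H x r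
      = ENNReal.ofReal ((r/ε) ^ (n+d) * A * (2 * r * Real.exp (-r ^ 2))) := by
    intro r hr
    rw [Set.mem_Ioi] at hr
    have heq : (fun x : Es => H x r) = (ball (0:Es) r).indicator
        (fun x => ENNReal.ofReal (f x * (2 * r * Real.exp (-r ^ 2)))) := by
      funext x
      rw [hHdef]
      by_cases h : ‖x‖ < r <;> simp [Set.indicator_apply, Set.mem_Ioi, mem_ball_zero_iff, h]
    rw [heq, lintegral_indicator measurableSet_ball]
    have hi : IntegrableOn (fun x : Es => f x * (2 * r * Real.exp (-r ^ 2)))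
        (ball (0:Es) r) := by
      apply IntegrableOn.mono_set _ ball_subset_closedBall
      exact ((hf.continuousOn).integrableOn_compact (isCompact_closedBall 0 r)).mul_const _
    rw [← MeasureTheory.ofReal_integral_eq_lintegral_ofReal hi
      (Filter.Eventually.of_forall (fun x => by
        have : 0 ≤ 2 * r * Real.exp (-r ^ 2) := by positivity
        exact mul_nonneg (hpos x) this))]
    congr 1
    rw [MeasureTheory.integral_mul_const, setint_ball_closedBall hn, scaling f d hhom hε hr]
  -- chain
  have chain : ENNReal.ofReal (∫ x : Es, f x * Real.exp (-‖x‖ ^ 2))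
      = ∫⁻ r in Set.Ioi (0:ℝ), ENNReal.ofReal ((r/ε) ^ (n+d) * A * (2 * r * Real.exp (-r ^ 2))) := by
    rw [MeasureTheory.ofReal_integral_eq_lintegral_ofReal hint
      (Filter.Eventually.of_forall (fun x => mul_nonneg (hpos x) (Real.exp_nonneg _)))]
    calc ∫⁻ x : Es, ENNReal.ofReal (f x * Real.exp (-‖x‖ ^ 2))
        = ∫⁻ x : Es, ∫⁻ r in Set.Ioi (0:ℝ), H x r := by
          refine lintegral_congr fun x => (claim1 x).symm
      _ = ∫⁻ r in Set.Ioi (0:ℝ), ∫⁻ x : Es, H x r := lintegral_lintegral_swap hmeas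
      _ = _ := setLIntegral_congr_fun measurableSet_Ioi
            claim3
  -- outer integral
  have houter : ∫⁻ r in Set.Ioi (0:ℝ), ENNReal.ofReal ((r/ε) ^ (n+d) * A * (2 * r * Real.exp (-r ^ 2)))
      = ENNReal.ofReal (A / ε ^ (n+d) * (2 * Kk (n+d+1))) := by
    have hig : IntegrableOn (fun r : ℝ => (r/ε) ^ (n+d) * A * (2 * r * Real.exp (-r ^ 2)))
        (Set.Ioi (0:ℝ)) := by
      have : (fun r : ℝ => (r/ε) ^ (n+d) * A * (2 * r * Real.exp (-r ^ 2)))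
          = fun r => (A * 2 / ε ^ (n+d)) * (r ^ (n+d+1) * Real.exp (-r ^ 2)) := by
        funext r; rw [div_pow]; ring
      rw [this]
      exact ((integrable_mom (n+d+1)).const_mul _).integrableOn
    rw [← MeasureTheory.ofReal_integral_eq_lintegral_ofReal hig
      ((ae_restrict_iff' measurableSet_Ioi).2 (Filter.Eventually.of_forall (fun r hr => by
        rw [Set.mem_Ioi] at hr
        have h1 : (0:ℝ) ≤ (r/ε) ^ (n+d) := by positivity
        have h2 : (0:ℝ) ≤ 2 * r * Real.exp (-r ^ 2) := by positivity
        exact mul_nonneg (mul_nonneg h1 hA0) h2)))]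
    congr 1
    have : ∀ r : ℝ, (r/ε) ^ (n+d) * A * (2 * r * Real.exp (-r ^ 2))
        = (A * 2 / ε ^ (n+d)) * (r ^ (n+d+1) * Real.exp (-r ^ 2)) := by
      intro r; rw [div_pow]; ring
    rw [MeasureTheory.setIntegral_congr_fun measurableSet_Ioi (fun r _ => this r),
      MeasureTheory.integral_const_mul]
    rw [Kk]; ring
  rw [houter] at chain
  have hrhs : 0 ≤ A / ε ^ (n+d) * (2 * Kk (n+d+1)) := by
    have hK : 0 ≤ Kk (n+d+1) := setIntegral_nonneg measurableSet_Ioi (fun r hr => by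
      rw [Set.mem_Ioi] at hr; positivity)
    positivity
  have hlhs : 0 ≤ ∫ x : Es, f x * Real.exp (-‖x‖ ^ 2) :=
    integral_nonneg (fun x => mul_nonneg (hpos x) (Real.exp_nonneg _))
  exact (ENNReal.ofReal_eq_ofReal_iff hlhs hrhs).1 chain

noncomputable def frobeniusNorm {n : ℕ} (M : Matrix (Fin n) (Fin n) ℝ) : ℝ :=
  Real.sqrt (∑ i, ∑ j, (M i j) ^ 2)

theorem ball_quartic_form_integral {n : ℕ} (hn : 1 ≤ n) (ε : ℝ) (hε : 0 < ε)
    (Δ : Matrix (Fin n) (Fin n) ℝ) (hΔ : Δ.IsSymm) :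
    (∫ τ in closedBall (0 : EuclideanSpace ℝ (Fin n)) ε,
        (∑ i, ∑ j, τ i * Δ i j * τ j) ^ 2) =
      (ε ^ 4 * (volume (closedBall (0 : EuclideanSpace ℝ (Fin n)) ε)).toReal /
          ((n + 2) * (n + 4))) *
        (2 * frobeniusNorm Δ ^ 2 + (Matrix.trace Δ) ^ 2) ∧
    (∫ τ in closedBall (0 : EuclideanSpace ℝ (Fin n)) ε,
        (∑ i, ∑ j, τ i * Δ i j * τ j) ^ 2) ≥
      (ε ^ 4 * (volume (closedBall (0 : EuclideanSpace ℝ (Fin n)) ε)).toReal /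
          ((n + 2) * (n + 4))) * frobeniusNorm Δ ^ 2 := by
  set V : ℝ := (volume (closedBall (0 : EuclideanSpace ℝ (Fin n)) ε)).toReal with hVdef
  set f : EuclideanSpace ℝ (Fin n) → ℝ :=
    fun x => (∑ i, ∑ j, x i * Δ i j * x j) ^ 2 with hfdef
  set A : ℝ := ∫ τ in closedBall (0 : EuclideanSpace ℝ (Fin n)) ε, f τ with hAdef
  set T : ℝ := ∑ i, Δ i i with hTdef
  set F2 : ℝ := ∑ i, ∑ j, Δ i j ^ 2 with hF2def
  -- basic facts
  have hcoord : ∀ i, Continuous fun x : EuclideanSpace ℝ (Fin n) => x i := fun i =>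
    (PiLp.continuous_apply 2 _ i)
  have hf : Continuous f := by
    apply Continuous.pow
    exact continuous_finset_sum _ fun i _ => continuous_finset_sum _ fun j _ =>
      ((hcoord i).mul continuous_const).mul (hcoord j)
  have hpos : ∀ x, 0 ≤ f x := fun x => sq_nonneg _
  have hhom : ∀ c : ℝ, 0 < c → ∀ x, f (c • x) = c ^ 4 * f x := by
    intro c hc x
    have hq : (∑ i, ∑ j, (c • x) i * Δ i j * (c • x) j)
        = c ^ 2 * ∑ i, ∑ j, x i * Δ i j * x j := by
      simp only [PiLp.smul_apply, smul_eq_mul, Finset.mul_sum]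
      exact Finset.sum_congr rfl fun i _ => Finset.sum_congr rfl fun j _ => by ring
    show (∑ i, ∑ j, (c • x) i * Δ i j * (c • x) j) ^ 2 = c ^ 4 * f x
    rw [hq, hfdef]
    ring
  -- Gaussian transfer
  set g : (Fin n → ℝ) → ℝ := fun y =>
    (∑ i, ∑ j, y i * Δ i j * y j) ^ 2 * ∏ m, Real.exp (-(y m) ^ 2) with hgdef
  have hEq : (fun x : EuclideanSpace ℝ (Fin n) => f x * Real.exp (-‖x‖ ^ 2))
      = fun x => g (fun i => x i) := funext fun x => by rw [exp_norm_eq]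
  have hint : Integrable fun x : EuclideanSpace ℝ (Fin n) => f x * Real.exp (-‖x‖ ^ 2) := by
    rw [hEq]; exact transfer_integrable g (gauss_pi_integrable Δ)
  have hsymm : ∑ i, ∑ j, Δ i j * Δ j i = F2 :=
    Finset.sum_congr rfl fun i _ => Finset.sum_congr rfl fun j _ => by
      rw [hΔ.apply i j]; ring
  have hGE : ∫ x : EuclideanSpace ℝ (Fin n), f x * Real.exp (-‖x‖ ^ 2)
      = Real.sqrt π ^ n / 4 * (T ^ 2 + F2 + F2) := by
    rw [hEq, transfer_integral g, hgdef]
    rw [gauss_pi_value Δ, hsymm]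
  have hGE2 := layercake hn f hf hpos 4 hhom hint hε
  -- constant function
  have hPE2 := layercake hn (fun _ => (1:ℝ)) continuous_const (fun _ => zero_le_one) 0
    (fun c hc x => by simp) (by
      have h0 : Integrable (fun y : Fin n → ℝ => ∏ m, Real.exp (-(y m) ^ 2)) :=
        Integrable.fintype_prod (f := fun m t => Real.exp (-t ^ 2)) (fun m => by
          simpa using integrable_mom 0)
      have h1 := transfer_integrable _ h0
      exact h1.congr (Filter.Eventually.of_forall fun x => by
        show (∏ m, Real.exp (-(x m) ^ 2)) = _
        simp [exp_norm_eq])) hε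
  have hPE : ∫ x : EuclideanSpace ℝ (Fin n), (1:ℝ) * Real.exp (-‖x‖ ^ 2)
      = Real.sqrt π ^ n := by
    have h1 : (fun x : EuclideanSpace ℝ (Fin n) => (1:ℝ) * Real.exp (-‖x‖ ^ 2))
        = fun x => (fun y : Fin n → ℝ => ∏ m, Real.exp (-(y m) ^ 2)) (fun i => x i) :=
      funext fun x => by rw [one_mul, exp_norm_eq]
    rw [h1, transfer_integral (fun y : Fin n → ℝ => ∏ m, Real.exp (-(y m) ^ 2))]
    rw [volume_pi, MeasureTheory.integral_fintype_prod_eq_pow (ι := Fin n) (fun t => Real.exp (-t ^ 2))]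
    have : ∫ t : ℝ, Real.exp (-t ^ 2) = Real.sqrt π := by
      have := mom_zero; rw [Mm] at this; simpa using this
    rw [this, Fintype.card_fin]
  have hconst : ∫ x in closedBall (0 : EuclideanSpace ℝ (Fin n)) ε, (1:ℝ) = V := by
    rw [setIntegral_const, smul_eq_mul, mul_one]
    rfl
  rw [hconst, hPE] at hPE2
  simp only [Nat.add_zero] at hPE2
  -- positivity facts
  have hV : 0 < V := by
    rw [hVdef]
    exact ENNReal.toReal_pos (Metric.measure_closedBall_pos volume _ hε).ne'
      measure_closedBall_lt_top.ne
  have hπ : (0:ℝ) < Real.sqrt π := Real.sqrt_pos.2 Real.pi_pos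
  have hπn : (0:ℝ) < Real.sqrt π ^ n := by positivity
  have hεn : (0:ℝ) < ε ^ n := by positivity
  -- K values
  have h5 : 2 * Kk (n+5) = ((n:ℝ)+4)*((n:ℝ)+2)/4 * (2 * Kk (n+1)) := by
    have k1 := K_rec (n+3)
    have k2 := K_rec (n+1)
    have e1 : n+3+2 = n+5 := by omega
    have e2 : n+1+2 = n+3 := by omega
    rw [e1] at k1; rw [e2] at k2
    rw [k1, k2]; push_cast; ring
  rw [hGE] at hGE2
  rw [h5] at hGE2
  have hKn1 : 2 * Kk (n+1) = Real.sqrt π ^ n * ε ^ n / V := by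
    field_simp at hPE2 ⊢
    linear_combination -hPE2
  rw [hKn1] at hGE2
  -- solve for A
  have hA : A = ε ^ 4 * V / (((n:ℝ) + 2) * ((n:ℝ) + 4)) * (T ^ 2 + F2 + F2) := by
    rw [div_mul_eq_mul_div, eq_div_iff (by positivity : (((n:ℝ) + 2) * ((n:ℝ) + 4)) ≠ 0)]
    have hpow : ε ^ (n+4) = ε ^ n * ε ^ 4 := pow_add ε n 4
    rw [hpow, ← hAdef] at hGE2
    field_simp at hGE2
    have key : (4 * Real.sqrt π ^ n * ε ^ n) * (A * (((n:ℝ) + 2) * ((n:ℝ) + 4)))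
        = (4 * Real.sqrt π ^ n * ε ^ n) * (ε ^ 4 * V * (T ^ 2 + F2 + F2)) := by
      linear_combination (-(4 * Real.sqrt π ^ n * ε ^ n)) * hGE2
    have h40 : (4 * Real.sqrt π ^ n * ε ^ n) ≠ 0 := by positivity
    have := mul_left_cancel₀ h40 key
    linarith [this]
  have hfrob : frobeniusNorm Δ ^ 2 = F2 := Real.sq_sqrt (by positivity)
  have htr : Matrix.trace Δ = T := by simp [Matrix.trace, Matrix.diag, hTdef]
  have hF20 : 0 ≤ F2 := by
    rw [hF2def]
    exact Finset.sum_nonneg fun i _ => Finset.sum_nonneg fun j _ => sq_nonneg _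
  constructor
  · show A = _
    rw [hA, hfrob, htr]
    ring
  · show A ≥ _
    rw [hA, hfrob]
    have hM : 0 ≤ ε ^ 4 * V / (((n:ℝ) + 2) * ((n:ℝ) + 4)) := by positivity
    nlinarith [sq_nonneg T, mul_nonneg hM hF20, mul_nonneg hM (sq_nonneg T)]
end

section
/- Let n ≥ 1, ε > 0, k > 0, and let δ ≥ 0 be a real number satisfying δ²/(n(n+2)) − (k·ε²/(3(n+4)))·δ − (k/6)²·ε⁴/(n+6) ≤ 0. Then δ ≤ (1/2)·n·k·ε². -/
theorem quadratic_inequality_bound (n : ℕ) (hn : 1 ≤ n) (ε k δ : ℝ)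
    (hε : 0 < ε) (hk : 0 < k) (hδ : 0 ≤ δ)
    (h : δ ^ 2 / (n * (n + 2)) - (k * ε ^ 2 / (3 * (n + 4))) * δ -
        (k / 6) ^ 2 * ε ^ 4 / (n + 6) ≤ 0) :
    δ ≤ (1/2) * n * k * ε ^ 2 := by
  have hN : (1:ℝ) ≤ n := by exact_mod_cast hn
  set N : ℝ := (n:ℝ) with hNdef
  have hN0 : (0:ℝ) < N := lt_of_lt_of_le one_pos hN
  set c : ℝ := k * ε ^ 2 with hcdef
  have hc : 0 < c := by positivity
  have hc2 : c ^ 2 = k ^ 2 * ε ^ 4 := by rw [hcdef]; ring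
  have hD : (0:ℝ) < N * (N + 2) * (3 * (N + 4)) * (6 ^ 2 * (N + 6)) := by positivity
  field_simp at h
  have hnum : δ ^ 2 * (3 * (N + 4)) * (N + 6) * 36 - (c * δ * (N * (N + 2)) * (N + 6) * 36 + k ^ 2 * ε ^ 4 * (N * (N + 2)) * (3 * (N + 4))) ≤ 0 := by linarith [h]
  have h' : δ ^ 2 * (3 * (N + 4)) * (N + 6) * 36 ≤
      c * δ * (N * (N + 2)) * (N + 6) * 36 + c ^ 2 * (N * (N + 2)) * (3 * (N + 4)) := by
    rw [← hc2] at hnum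
    linarith [hnum]
  by_contra hcon
  push_neg at hcon
  have ha : 0 < δ - N * c / 2 := by
    have he : (1:ℝ)/2 * N * k * ε ^ 2 = N * c / 2 := by rw [hcdef]; ring
    linarith [he ▸ hcon]
  have hA : 0 ≤ (N + 4) * (N + 6) * δ := by positivity
  have hB : 0 ≤ N * (N + 6) * (N + 8) * c := by positivity
  have P1 : 0 ≤ (δ - N * c / 2) *
      ((N + 4) * (N + 6) * (δ + N * c / 2) * 108 - 36 * N * (N + 2) * (N + 6) * c) := by
    apply mul_nonneg ha.le
    linarith [hA, hB]
  have P2 : 0 < 3 * N * c ^ 2 * (3 * N * (N + 6) * (N + 8) - (N + 2) * (N + 4)) := by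
    have hin : 0 < 3 * N * (N + 6) * (N + 8) - (N + 2) * (N + 4) := by
      nlinarith [mul_nonneg (mul_nonneg hN0.le hN0.le) hN0.le, sq_nonneg (N - 1), hN]
    positivity
  have key : δ ^ 2 * (3 * (N + 4)) * (N + 6) * 36 -
      (c * δ * (N * (N + 2)) * (N + 6) * 36 + c ^ 2 * (N * (N + 2)) * (3 * (N + 4))) =
      (δ - N * c / 2) *
        ((N + 4) * (N + 6) * (δ + N * c / 2) * 108 - 36 * N * (N + 2) * (N + 6) * c) +
      3 * N * c ^ 2 * (3 * N * (N + 6) * (N + 8) - (N + 2) * (N + 4)) := by ring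
  linarith [P1, P2, h', key]
end
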